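/- arXiv:1811.00522 — 5 statements merged into one kernel-verified Lean document; each statement's English description precedes it below -/
import Mathlib

section
/- Suppose there is a sequence $\epsilon_i \to 0$ such that the perturbed ODE $\dot{y}=f(t,y)+g(\epsilon_i,t,y)$, $y(0)=z_{\epsilon_i}$, has a solution $y^{\epsilon_i}$ on $[0,T]$ with $\sup_{i\ge 1,\,0\le t\le T}|y^{\epsilon_i}(t)|\le C_2$ for some constant $C_2$, and $z_{\epsilon_i}\to z$. Then the unperturbed ODE $\dot{x}=f(t,x)$, $x(0)=z$, has a solution on all of $[0,T]$. -/
open MeasureTheory Set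

/-- Theorem 2 ii): if along a sequence `εᵢ → 0` the perturbed ODEs have solutions on
`[0,T]` that are uniformly bounded, then the unperturbed ODE `x' = f t x`, `x 0 = z`,
has a solution on all of `[0,T]`. -/
theorem stmt2 {K : ℕ} (T C₁ C₂ : ℝ) (hT : 0 < T)
    (f : ℝ → EuclideanSpace ℝ (Fin K) → EuclideanSpace ℝ (Fin K))
    (g : ℝ → ℝ → EuclideanSpace ℝ (Fin K) → EuclideanSpace ℝ (Fin K))
    (z : EuclideanSpace ℝ (Fin K)) (zε : ℝ → EuclideanSpace ℝ (Fin K))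
    -- A1)
    (hA1 : ∀ ε ∈ Ioc (0:ℝ) 1, ∀ t ∈ Icc (0:ℝ) T, ‖f t 0‖ + ‖g ε t 0‖ ≤ C₁)
    -- A2)
    (hA2 : ∀ v, Measurable (fun t => f t v) ∧ ∀ ε ∈ Ioc (0:ℝ) 1, Measurable (fun t => g ε t v))
    -- A3)
    (hA3 : ∀ r > (0:ℝ), ∃ Lip : ℝ, ∀ t ∈ Icc (0:ℝ) T,
      ∀ a ∈ Metric.ball (0 : EuclideanSpace ℝ (Fin K)) r,
      ∀ b ∈ Metric.ball (0 : EuclideanSpace ℝ (Fin K)) r,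
        ‖f t a - f t b‖ ≤ Lip * ‖a - b‖ ∧
        ∀ ε ∈ Ioc (0:ℝ) 1, ‖f t a + g ε t a - (f t b + g ε t b)‖ ≤ Lip * ‖a - b‖)
    -- A4)
    (hA4 : ∀ r > (0:ℝ), ∀ δ > (0:ℝ), ∃ ε₀ > (0:ℝ), ∀ ε ∈ Ioc (0:ℝ) ε₀, ∀ t ∈ Icc (0:ℝ) T,
      ∀ v ∈ Metric.ball (0 : EuclideanSpace ℝ (Fin K)) r, ‖g ε t v‖ ≤ δ)
    -- a sequence εᵢ → 0 with uniformly bounded solutions on [0,T]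
    (ε : ℕ → ℝ) (hεmem : ∀ i, ε i ∈ Ioc (0:ℝ) 1)
    (hεlim : Filter.Tendsto ε Filter.atTop (nhds 0))
    (y : ℕ → ℝ → EuclideanSpace ℝ (Fin K))
    (hy0 : ∀ i, y i 0 = zε (ε i))
    (hy : ∀ i, ∀ t ∈ Icc (0:ℝ) T,
      HasDerivAt (y i) (f t (y i t) + g (ε i) t (y i t)) t)
    (hybound : ∀ i, ∀ t ∈ Icc (0:ℝ) T, ‖y i t‖ ≤ C₂)
    (hzlim : Filter.Tendsto (fun i => zε (ε i)) Filter.atTop (nhds z)) :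
    ∃ x : ℝ → EuclideanSpace ℝ (Fin K), x 0 = z ∧
      ∀ t ∈ Icc (0:ℝ) T, HasDerivAt x (f t (x t)) t := by
  classical
  have hC₂ : (0:ℝ) ≤ C₂ := le_trans (norm_nonneg _) (hybound 0 0 ⟨le_refl _, hT.le⟩)
  set r : ℝ := C₂ + 1 with hrdef
  have hrpos : (0:ℝ) < r := by positivity
  obtain ⟨Lip, hLip⟩ := hA3 r hrpos
  set L : ℝ := max Lip 1 with hLdef
  have hL1 : (1:ℝ) ≤ L := le_max_right _ _
  have hLpos : (0:ℝ) < L := lt_of_lt_of_le one_pos hL1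
  have hymem : ∀ i, ∀ t ∈ Icc (0:ℝ) T,
      y i t ∈ Metric.ball (0 : EuclideanSpace ℝ (Fin K)) r := by
    intro i t ht
    rw [mem_ball_zero_iff]
    exact lt_of_le_of_lt (hybound i t ht) (by rw [hrdef]; linarith)
  have hLipfg : ∀ i, ∀ t ∈ Icc (0:ℝ) T,
      ∀ a ∈ Metric.ball (0 : EuclideanSpace ℝ (Fin K)) r,
      ∀ b ∈ Metric.ball (0 : EuclideanSpace ℝ (Fin K)) r,
      ‖f t a + g (ε i) t a - (f t b + g (ε i) t b)‖ ≤ L * ‖a - b‖ := by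
    intro i t ht a ha b hb
    refine le_trans ((hLip t ht a ha b hb).2 (ε i) (hεmem i)) ?_
    exact mul_le_mul_of_nonneg_right (le_max_left _ _) (norm_nonneg _)
  have hLipf : ∀ t ∈ Icc (0:ℝ) T,
      ∀ a ∈ Metric.ball (0 : EuclideanSpace ℝ (Fin K)) r,
      ∀ b ∈ Metric.ball (0 : EuclideanSpace ℝ (Fin K)) r,
      ‖f t a - f t b‖ ≤ L * ‖a - b‖ := by
    intro t ht a ha b hb
    refine le_trans ((hLip t ht a ha b hb).1) ?_
    exact mul_le_mul_of_nonneg_right (le_max_left _ _) (norm_nonneg _)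
  have hgsmall : ∀ δ > (0:ℝ), ∃ N : ℕ, ∀ i ≥ N, ∀ t ∈ Icc (0:ℝ) T,
      ∀ v ∈ Metric.ball (0 : EuclideanSpace ℝ (Fin K)) r, ‖g (ε i) t v‖ ≤ δ := by
    intro δ hδ
    obtain ⟨ε₀, hε₀, hg⟩ := hA4 r hrpos δ hδ
    have hev : ∀ᶠ i in Filter.atTop, ε i < ε₀ := hεlim.eventually (gt_mem_nhds hε₀)
    obtain ⟨N, hN⟩ := Filter.eventually_atTop.mp hev
    exact ⟨N, fun i hi => hg (ε i) ⟨(hεmem i).1, (hN i hi).le⟩⟩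
  have hycont : ∀ i, ContinuousOn (y i) (Icc (0:ℝ) T) :=
    fun i t ht => ((hy i t ht).continuousAt).continuousWithinAt
  -- uniform Cauchy property on [0,T] via Grönwall
  have hucauchy : ∀ η > (0:ℝ), ∃ N : ℕ, ∀ i ≥ N, ∀ j ≥ N, ∀ t ∈ Icc (0:ℝ) T,
      ‖y i t - y j t‖ ≤ η := by
    intro η hη
    have hE : (0:ℝ) < Real.exp (L * T) := Real.exp_pos _
    set δ : ℝ := η / (3 * Real.exp (L * T)) with hδdef
    have hδ : 0 < δ := by positivity
    obtain ⟨N₂, hN₂⟩ := hgsmall δ hδ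
    have hzc : CauchySeq (fun i => zε (ε i)) := hzlim.cauchySeq
    obtain ⟨N₁, hN₁⟩ := Metric.cauchySeq_iff.mp hzc δ hδ
    refine ⟨max N₁ N₂, fun i hi j hj t ht => ?_⟩
    have hiN₁ : N₁ ≤ i := le_trans (le_max_left _ _) hi
    have hjN₁ : N₁ ≤ j := le_trans (le_max_left _ _) hj
    have hiN₂ : N₂ ≤ i := le_trans (le_max_right _ _) hi
    have hjN₂ : N₂ ≤ j := le_trans (le_max_right _ _) hj
    have key : ∀ s ∈ Icc (0:ℝ) T, ‖y i s - y j s‖ ≤ gronwallBound δ L (2*δ) (s - 0) := by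
      refine norm_le_gronwallBound_of_norm_deriv_right_le
        ((hycont i).sub (hycont j)) (fun s hs =>
          (((hy i s (Ico_subset_Icc_self hs)).sub
            (hy j s (Ico_subset_Icc_self hs))).hasDerivWithinAt)) ?_ ?_
      · rw [hy0 i, hy0 j, ← dist_eq_norm]
        exact (hN₁ i hiN₁ j hjN₁).le
      · intro s hs
        have hsIcc : s ∈ Icc (0:ℝ) T := Ico_subset_Icc_self hs
        have hai := hymem i s hsIcc
        have haj := hymem j s hsIcc
        have h1 := hLipfg i s hsIcc (y i s) hai (y j s) haj
        have h2 := hN₂ i hiN₂ s hsIcc (y j s) haj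
        have h3 := hN₂ j hjN₂ s hsIcc (y j s) haj
        have heq : (f s (y i s) + g (ε i) s (y i s)) - (f s (y j s) + g (ε j) s (y j s))
            = ((f s (y i s) + g (ε i) s (y i s)) - (f s (y j s) + g (ε i) s (y j s)))
              + (g (ε i) s (y j s) - g (ε j) s (y j s)) := by abel
        rw [heq]
        refine le_trans (norm_add_le _ _) ?_
        have h4 : ‖g (ε i) s (y j s) - g (ε j) s (y j s)‖
            ≤ ‖g (ε i) s (y j s)‖ + ‖g (ε j) s (y j s)‖ := norm_sub_le _ _
        linarith
    have hb := key t ht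
    refine le_trans hb ?_
    rw [gronwallBound_of_K_ne_0 (ne_of_gt hLpos)]
    have h1 : Real.exp (L * (t - 0)) ≤ Real.exp (L * T) := by
      apply Real.exp_le_exp.2
      rw [sub_zero]
      exact mul_le_mul_of_nonneg_left ht.2 hLpos.le
    have h2 : (1:ℝ) ≤ Real.exp (L * (t - 0)) := by
      apply Real.one_le_exp
      rw [sub_zero]
      exact mul_nonneg hLpos.le ht.1
    have h3 : 2*δ/L ≤ 2*δ := div_le_self (by positivity) hL1
    have h4 : (0:ℝ) ≤ Real.exp (L*(t-0)) - 1 := by linarith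
    have h5 : δ * Real.exp (L*(t-0)) ≤ δ * Real.exp (L*T) :=
      mul_le_mul_of_nonneg_left h1 hδ.le
    have h6 : 2*δ/L * (Real.exp (L*(t-0)) - 1) ≤ 2*δ * Real.exp (L*T) := by
      calc 2*δ/L * (Real.exp (L*(t-0)) - 1)
          ≤ 2*δ * (Real.exp (L*(t-0)) - 1) := mul_le_mul_of_nonneg_right h3 h4
        _ ≤ 2*δ * Real.exp (L*T) := by
            have : Real.exp (L*(t-0)) - 1 ≤ Real.exp (L*T) := by linarith
            exact mul_le_mul_of_nonneg_left this (by positivity)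
    have h7 : δ * Real.exp (L*T) + 2*δ*Real.exp (L*T) = η := by
      rw [hδdef]; field_simp; ring
    linarith
  -- the clamp function
  set c : ℝ → ℝ := fun t => max 0 (min t T) with hcdef
  have hcmem : ∀ t, c t ∈ Icc (0:ℝ) T :=
    fun t => ⟨le_max_left _ _, max_le hT.le (min_le_right _ _)⟩
  have hceq : ∀ t ∈ Icc (0:ℝ) T, c t = t := by
    intro t ht
    simp only [hcdef]
    rw [min_eq_left ht.2, max_eq_right ht.1]
  have hc0 : ∀ s : ℝ, s ≤ 0 → c s = 0 := by
    intro s hs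
    simp only [hcdef]
    rw [max_eq_left (le_trans (min_le_left _ _) hs)]
  have hcT : ∀ s : ℝ, T ≤ s → c s = T := by
    intro s hs
    simp only [hcdef]
    rw [min_eq_right hs, max_eq_right hT.le]
  have hcauchy : ∀ t : ℝ, CauchySeq (fun i => y i (c t)) := by
    intro t
    rw [Metric.cauchySeq_iff]
    intro η hη
    obtain ⟨N, hN⟩ := hucauchy (η/2) (by positivity)
    refine ⟨N, fun m hm n hn => ?_⟩
    rw [dist_eq_norm]
    exact lt_of_le_of_lt (hN m hm n hn (c t) (hcmem t)) (by linarith)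
  have hxlim : ∀ t : ℝ, ∃ v, Filter.Tendsto (fun i => y i (c t)) Filter.atTop (nhds v) :=
    fun t => cauchySeq_tendsto_of_complete (hcauchy t)
  choose x hx using hxlim
  have hx0 : x 0 = z := by
    have h1 := hx 0
    rw [hceq 0 ⟨le_refl _, hT.le⟩] at h1
    have h2 : Filter.Tendsto (fun i => y i 0) Filter.atTop (nhds z) :=
      hzlim.congr (fun i => (hy0 i).symm)
    exact tendsto_nhds_unique h1 h2
  have hxbound : ∀ t, ‖x t‖ ≤ C₂ := by
    intro t
    exact le_of_tendsto (hx t).norm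
      (Filter.Eventually.of_forall (fun i => hybound i (c t) (hcmem t)))
  have hxmem : ∀ t, x t ∈ Metric.ball (0 : EuclideanSpace ℝ (Fin K)) r := by
    intro t
    rw [mem_ball_zero_iff]
    exact lt_of_le_of_lt (hxbound t) (by rw [hrdef]; linarith)
  have hyx : ∀ η > (0:ℝ), ∃ N, ∀ i ≥ N, ∀ t : ℝ, ‖y i (c t) - x t‖ ≤ η := by
    intro η hη
    obtain ⟨N, hN⟩ := hucauchy η hη
    refine ⟨N, fun i hi t => ?_⟩
    have h1 : Filter.Tendsto (fun j => ‖y i (c t) - y j (c t)‖) Filter.atTop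
        (nhds ‖y i (c t) - x t‖) := (tendsto_const_nhds.sub (hx t)).norm
    exact le_of_tendsto h1
      (Filter.eventually_atTop.2 ⟨N, fun j hj => hN i hi j hj (c t) (hcmem t)⟩)
  -- the extended solutions and their derivatives
  set G : ℕ → ℝ → EuclideanSpace ℝ (Fin K) :=
    fun i t => f (c t) (y i (c t)) + g (ε i) (c t) (y i (c t)) with hGdef
  set G' : ℝ → EuclideanSpace ℝ (Fin K) := fun t => f (c t) (x t) with hG'def
  set Y : ℕ → ℝ → EuclideanSpace ℝ (Fin K) :=
    fun i t => y i (c t) + (t - c t) • G i t with hYdef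
  set X : ℝ → EuclideanSpace ℝ (Fin K) := fun t => x t + (t - c t) • G' t with hXdef
  have hGconv : TendstoUniformlyOn G G' Filter.atTop (Ioo (-1:ℝ) (T+1)) := by
    rw [Metric.tendstoUniformlyOn_iff]
    intro η hη
    obtain ⟨N₁, hN₁⟩ := hyx (η / (3*L)) (by positivity)
    obtain ⟨N₂, hN₂⟩ := hgsmall (η/3) (by positivity)
    rw [Filter.eventually_atTop]
    refine ⟨max N₁ N₂, fun i hi t _ => ?_⟩
    have hi₁ : N₁ ≤ i := le_trans (le_max_left _ _) hi
    have hi₂ : N₂ ≤ i := le_trans (le_max_right _ _) hi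
    have hτ := hcmem t
    have hyi := hymem i (c t) hτ
    rw [dist_eq_norm]
    have heq : G' t - G i t = (f (c t) (x t) - f (c t) (y i (c t)))
        + (- g (ε i) (c t) (y i (c t))) := by
      simp only [hGdef, hG'def]; abel
    rw [heq]
    refine lt_of_le_of_lt (norm_add_le _ _) ?_
    rw [norm_neg]
    have h1 := hLipf (c t) hτ (x t) (hxmem t) (y i (c t)) hyi
    have h2 : ‖x t - y i (c t)‖ ≤ η / (3*L) := by
      rw [norm_sub_rev]; exact hN₁ i hi₁ t
    have h3 : L * ‖x t - y i (c t)‖ ≤ L * (η / (3*L)) :=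
      mul_le_mul_of_nonneg_left h2 hLpos.le
    have h4 : L * (η / (3*L)) = η/3 := by field_simp
    have h5 := hN₂ i hi₂ (c t) hτ (y i (c t)) hyi
    have h6 : ‖f (c t) (x t) - f (c t) (y i (c t))‖ ≤ η/3 := by
      rw [← h4]; exact le_trans h1 h3
    linarith
  have hYIcc : ∀ j, ∀ s ∈ Icc (0:ℝ) T, Y j s = y j s := by
    intro j s hs
    simp only [hYdef]
    rw [hceq s hs]
    simp
  have hYpt : ∀ t ∈ Ioo (-1:ℝ) (T+1),
      Filter.Tendsto (fun i => Y i t) Filter.atTop (nhds (X t)) := by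
    intro t ht
    have h1 : Filter.Tendsto (fun i => y i (c t)) Filter.atTop (nhds (x t)) := hx t
    have h2 : Filter.Tendsto (fun i => G i t) Filter.atTop (nhds (G' t)) :=
      hGconv.tendsto_at ht
    exact h1.add (h2.const_smul (t - c t))
  have hYderiv : ∀ i, ∀ t : ℝ, HasDerivAt (Y i) (G i t) t := by
    intro i t
    have hc00 : c 0 = 0 := hceq 0 ⟨le_refl _, hT.le⟩
    have hcTT : c T = T := hceq T ⟨hT.le, le_refl _⟩
    rcases lt_trichotomy t 0 with h0 | h0 | h0
    · -- t < 0
      have hGt : G i t = G i 0 := by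
        simp only [hGdef]; rw [hc0 t h0.le, hc00]
      have hA : HasDerivAt (fun s : ℝ => y i 0 + s • (G i 0)) (G i 0) t := by
        simpa using ((hasDerivAt_id t).smul_const (G i 0)).const_add (y i 0)
      rw [hGt]
      refine hA.congr_of_eventuallyEq ?_
      filter_upwards [Iio_mem_nhds h0] with s hs
      simp only [hYdef, hGdef]
      rw [hc0 s (le_of_lt hs), hc00]
      simp
    · -- t = 0
      subst h0
      have hA : HasDerivAt (fun s : ℝ => y i 0 + s • (G i 0)) (G i 0) 0 := by
        simpa using ((hasDerivAt_id (0:ℝ)).smul_const (G i 0)).const_add (y i 0)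
      have hleft : HasDerivWithinAt (Y i) (G i 0) (Iic 0) 0 := by
        refine (hA.hasDerivWithinAt).congr ?_ ?_
        · intro s hs
          simp only [hYdef, hGdef]
          rw [hc0 s hs, hc00]
          simp
        · simp only [hYdef, hGdef]
          rw [hc00]
          simp
      have hy00 : HasDerivAt (y i) (G i 0) 0 := by
        have h := hy i 0 ⟨le_refl _, hT.le⟩
        have : G i 0 = f 0 (y i 0) + g (ε i) 0 (y i 0) := by
          simp only [hGdef]; rw [hc00]
        rw [this]
        exact h
      have hright : HasDerivWithinAt (Y i) (G i 0) (Ici 0) 0 := by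
        refine (hy00.hasDerivWithinAt).congr_of_eventuallyEq ?_ (hYIcc i 0 ⟨le_refl _, hT.le⟩)
        have hmem : Iio T ∩ Ici 0 ∈ nhdsWithin (0:ℝ) (Ici 0) :=
          Filter.inter_mem (mem_nhdsWithin_of_mem_nhds (Iio_mem_nhds hT)) self_mem_nhdsWithin
        filter_upwards [hmem] with s hs
        exact hYIcc i s ⟨hs.2, hs.1.le⟩
      have hu := hleft.union hright
      rw [Set.Iic_union_Ici] at hu
      exact hasDerivWithinAt_univ.mp hu
    · rcases lt_trichotomy t T with hT' | hT' | hT'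
      · -- 0 < t < T
        have hmem : t ∈ Icc (0:ℝ) T := ⟨h0.le, hT'.le⟩
        have hd := hy i t hmem
        have hGt : G i t = f t (y i t) + g (ε i) t (y i t) := by
          simp only [hGdef]; rw [hceq t hmem]
        rw [hGt]
        refine hd.congr_of_eventuallyEq ?_
        filter_upwards [Ioo_mem_nhds h0 hT'] with s hs
        exact hYIcc i s ⟨hs.1.le, hs.2.le⟩
      · -- t = T
        subst hT'
        have hA : HasDerivAt (fun s : ℝ => y i t + (s - t) • (G i t)) (G i t) t := by
          simpa using (((hasDerivAt_id t).sub_const t).smul_const (G i t)).const_add (y i t)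
        have hctt : c t = t := hceq t ⟨h0.le, le_refl _⟩
        have hright : HasDerivWithinAt (Y i) (G i t) (Ici t) t := by
          refine (hA.hasDerivWithinAt).congr ?_ ?_
          · intro s hs
            simp only [hYdef, hGdef]
            rw [hcT s hs, hctt]
          · simp only [hYdef, hGdef]
            rw [hctt]
        have hyTT : HasDerivAt (y i) (G i t) t := by
          have h := hy i t ⟨h0.le, le_refl _⟩
          have : G i t = f t (y i t) + g (ε i) t (y i t) := by
            simp only [hGdef]; rw [hctt]
          rw [this]
          exact h
        have hleft : HasDerivWithinAt (Y i) (G i t) (Iic t) t := by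
          refine (hyTT.hasDerivWithinAt).congr_of_eventuallyEq ?_ (hYIcc i t ⟨h0.le, le_refl _⟩)
          have hmem : Ioi (0:ℝ) ∩ Iic t ∈ nhdsWithin t (Iic t) :=
            Filter.inter_mem (mem_nhdsWithin_of_mem_nhds (Ioi_mem_nhds h0)) self_mem_nhdsWithin
          filter_upwards [hmem] with s hs
          exact hYIcc i s ⟨hs.1.le, hs.2⟩
        have hu := hleft.union hright
        rw [Set.Iic_union_Ici] at hu
        exact hasDerivWithinAt_univ.mp hu
      · -- t > T
        have hGt : G i t = G i T := by
          simp only [hGdef]; rw [hcT t hT'.le, hcTT]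
        have hA : HasDerivAt (fun s : ℝ => y i T + (s - T) • (G i T)) (G i T) t := by
          simpa using (((hasDerivAt_id t).sub_const T).smul_const (G i T)).const_add (y i T)
        rw [hGt]
        refine hA.congr_of_eventuallyEq ?_
        filter_upwards [Ioi_mem_nhds hT'] with s hs
        simp only [hYdef, hGdef]
        rw [hcT s (le_of_lt hs), hcTT]
  have hXderiv : ∀ t ∈ Ioo (-1:ℝ) (T+1), HasDerivAt X (G' t) t := by
    intro t ht
    exact hasDerivAt_of_tendstoUniformlyOn isOpen_Ioo hGconv
      (Filter.Eventually.of_forall (fun i s _ => hYderiv i s)) hYpt ht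
  refine ⟨X, ?_, ?_⟩
  · simp only [hXdef]
    rw [hceq 0 ⟨le_refl _, hT.le⟩]
    simp [hx0]
  · intro t ht
    have htU : t ∈ Ioo (-1:ℝ) (T+1) := ⟨by linarith [ht.1], by linarith [ht.2]⟩
    have h := hXderiv t htU
    have hXt : X t = x t := by
      simp only [hXdef]
      rw [hceq t ht]
      simp
    have hG't : G' t = f t (X t) := by
      simp only [hG'def]
      rw [hceq t ht, hXt]
    rwa [hG't] at h
end

section
/- Suppose the coupled Riccati ODE system (arising from the $N$-player LQ game via dynamic programming) has a solution $(\mathbf{P}_1,\dots,\mathbf{P}_N)$ on $[0,T]$. Then for each $i > 1$, $\mathbf{P}_i(t) = J_{1i}^T \mathbf{P}_1(t) J_{1i}$ for all $t \in [0,T]$, where $J_{1i}$ is the block permutation exchanging block rows $1$ and $i$. -/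
open Matrix Set Finset

def MatrixHasDerivAt {m k : Type*} [Fintype m] [Fintype k]
    (Λ : ℝ → Matrix m k ℝ) (V : Matrix m k ℝ) (t : ℝ) : Prop :=
  ∀ i j, HasDerivAt (fun s => Λ s i j) (V i j) t

def blockSwap (N n : ℕ) (i j : Fin N) : Matrix (Fin N × Fin n) (Fin N × Fin n) ℝ :=
  Matrix.of fun p q => if p.1 = Equiv.swap i j q.1 ∧ p.2 = q.2 then 1 else 0

section Defs
variable (N n n₁ : ℕ)

/-- `Â = diag[A,…,A] + 1_{N×N} ⊗ (G/N)`. -/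
noncomputable def Ahat (A G : Matrix (Fin n) (Fin n) ℝ) :
    Matrix (Fin N × Fin n) (Fin N × Fin n) ℝ :=
  Matrix.of fun p q => (if p.1 = q.1 then A p.2 q.2 else 0) + G p.2 q.2 / N

/-- `B_k = e_k^N ⊗ B`. -/
noncomputable def Bblk (B : Matrix (Fin n) (Fin n₁) ℝ) (k : Fin N) :
    Matrix (Fin N × Fin n) (Fin n₁) ℝ :=
  Matrix.of fun p c => if p.1 = k then B p.2 c else 0

/-- `K_i = [0,…,I_n,…,0] - (1/N)[Γ,…,Γ]` with `I_n` in block position `i`. -/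
noncomputable def Kblk (Γ : Matrix (Fin n) (Fin n) ℝ) (i : Fin N) :
    Matrix (Fin n) (Fin N × Fin n) ℝ :=
  Matrix.of fun a q => (if q.1 = i then (if a = q.2 then (1:ℝ) else 0) else 0)
    - Γ a q.2 / N

/-- The vector field of the coupled Riccati system \eqref{DE3_P}. -/
noncomputable def riccatiRHS (A G : Matrix (Fin n) (Fin n) ℝ)
    (B : Matrix (Fin n) (Fin n₁) ℝ) (R : Matrix (Fin n₁) (Fin n₁) ℝ)
    (Γ Q : Matrix (Fin n) (Fin n) ℝ)
    (P : Fin N → Matrix (Fin N × Fin n) (Fin N × Fin n) ℝ) (i : Fin N) :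
    Matrix (Fin N × Fin n) (Fin N × Fin n) ℝ :=
  -(P i * Ahat N n A G + (Ahat N n A G)ᵀ * P i)
    + (P i * ∑ k, Bblk N n n₁ B k * R⁻¹ * (Bblk N n n₁ B k)ᵀ * P k
       + (∑ k, P k * (Bblk N n n₁ B k * R⁻¹ * (Bblk N n n₁ B k)ᵀ)) * P i)
    - P i * (Bblk N n n₁ B i * R⁻¹ * (Bblk N n n₁ B i)ᵀ) * P i
    - (Kblk N n Γ i)ᵀ * Q * Kblk N n Γ i

end Defs

section Aux1
variable {N n : ℕ} (i j : Fin N)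

/-- The index equiv swapping block `i` and `j`. -/
def swE (N n : ℕ) (i j : Fin N) : (Fin N × Fin n) ≃ (Fin N × Fin n) :=
  (Equiv.swap i j).prodCongr (Equiv.refl _)

lemma swE_apply (p : Fin N × Fin n) : swE N n i j p = (Equiv.swap i j p.1, p.2) := rfl

lemma blockSwap_mul {m : Type*} [Fintype m] (M : Matrix (Fin N × Fin n) m ℝ) :
    blockSwap N n i j * M = M.submatrix (swE N n i j) id := by
  ext p c
  rw [Matrix.mul_apply, Finset.sum_eq_single (swE N n i j p)]
  · simp [blockSwap, swE_apply, Equiv.swap_apply_self]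
  · intro r _ hr
    simp only [blockSwap, Matrix.of_apply, ite_mul, one_mul, zero_mul]
    rw [if_neg]
    rintro ⟨h1, h2⟩
    refine hr (Prod.ext ?_ h2.symm)
    rw [swE_apply, h1, Equiv.swap_apply_self]
  · simp

lemma mul_blockSwap {m : Type*} [Fintype m] (M : Matrix m (Fin N × Fin n) ℝ) :
    M * blockSwap N n i j = M.submatrix id (swE N n i j) := by
  ext c p
  rw [Matrix.mul_apply, Finset.sum_eq_single (swE N n i j p)]
  · simp [blockSwap, swE_apply, Equiv.swap_apply_self]
  · intro r _ hr
    simp only [blockSwap, Matrix.of_apply, mul_ite, mul_one, mul_zero]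
    rw [if_neg]
    rintro ⟨h1, h2⟩
    exact hr (Prod.ext (by rw [swE_apply]; exact h1) h2)
  · simp

lemma blockSwap_transpose : (blockSwap N n i j)ᵀ = blockSwap N n i j := by
  ext p q
  simp only [Matrix.transpose_apply, blockSwap, Matrix.of_apply]
  congr 1
  rw [eq_iff_iff]
  constructor
  · rintro ⟨h1, h2⟩; exact ⟨by rw [h1, Equiv.swap_apply_self], h2.symm⟩
  · rintro ⟨h1, h2⟩; exact ⟨by rw [h1, Equiv.swap_apply_self], h2.symm⟩

lemma blockSwap_mul_self : blockSwap N n i j * blockSwap N n i j = 1 := by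
  rw [blockSwap_mul]
  ext p q
  simp only [Matrix.submatrix_apply, blockSwap, Matrix.of_apply, Matrix.one_apply, swE_apply,
    id_eq, Equiv.swap_apply_self]
  by_cases h : p = q
  · simp [h]
  · rw [if_neg, if_neg h]
    rintro ⟨h1, h2⟩
    exact h (Prod.ext (by rwa [Equiv.swap_apply_eq_iff, Equiv.swap_apply_self] at h1) h2)

lemma sandwich (M : Matrix (Fin N × Fin n) (Fin N × Fin n) ℝ) :
    blockSwap N n i j * M * blockSwap N n i j = M.submatrix (swE N n i j) (swE N n i j) := by
  rw [blockSwap_mul, mul_blockSwap, Matrix.submatrix_submatrix]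
  rfl

end Aux1
section Aux2
variable {N n n₁ : ℕ} (i j : Fin N)

lemma Ahat_conj (A G : Matrix (Fin n) (Fin n) ℝ) :
    blockSwap N n i j * Ahat N n A G * blockSwap N n i j = Ahat N n A G := by
  rw [sandwich]
  ext p q
  simp only [Matrix.submatrix_apply, Ahat, Matrix.of_apply, swE_apply, EmbeddingLike.apply_eq_iff_eq]

lemma Bblk_conj (B : Matrix (Fin n) (Fin n₁) ℝ) (k : Fin N) :
    blockSwap N n i j * Bblk N n n₁ B k = Bblk N n n₁ B (Equiv.swap i j k) := by
  rw [blockSwap_mul]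
  ext p c
  simp only [Matrix.submatrix_apply, Bblk, Matrix.of_apply, swE_apply, id_eq,
    Equiv.swap_apply_eq_iff]

lemma Kblk_conj (Γ : Matrix (Fin n) (Fin n) ℝ) (k : Fin N) :
    Kblk N n Γ k * blockSwap N n i j = Kblk N n Γ (Equiv.swap i j k) := by
  rw [mul_blockSwap]
  ext a q
  simp only [Matrix.submatrix_apply, Kblk, Matrix.of_apply, swE_apply, id_eq,
    Equiv.swap_apply_eq_iff]

lemma Kquad_conj (Γ Q : Matrix (Fin n) (Fin n) ℝ) (k : Fin N) :
    (Kblk N n Γ k)ᵀ * Q * Kblk N n Γ k =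
      blockSwap N n i j * ((Kblk N n Γ (Equiv.swap i j k))ᵀ * Q * Kblk N n Γ (Equiv.swap i j k))
        * blockSwap N n i j := by
  have hK : Kblk N n Γ k = Kblk N n Γ (Equiv.swap i j k) * blockSwap N n i j := by
    rw [Kblk_conj, Equiv.swap_apply_self]
  rw [hK]
  simp only [Matrix.transpose_mul, blockSwap_transpose, Matrix.mul_assoc]
lemma rhs_conj {N n n₁ : ℕ} (i j : Fin N) (A G Γ Q : Matrix (Fin n) (Fin n) ℝ)
    (B : Matrix (Fin n) (Fin n₁) ℝ) (R : Matrix (Fin n₁) (Fin n₁) ℝ)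
    (Pm : Fin N → Matrix (Fin N × Fin n) (Fin N × Fin n) ℝ) (k : Fin N) :
    riccatiRHS N n n₁ A G B R Γ Q
        (fun m => blockSwap N n i j * Pm (Equiv.swap i j m) * blockSwap N n i j) k
      = blockSwap N n i j * riccatiRHS N n n₁ A G B R Γ Q Pm (Equiv.swap i j k)
          * blockSwap N n i j := by
  set J := blockSwap N n i j with hJdef
  set σ := Equiv.swap i j with hσdef
  have hJJ : J * J = 1 := blockSwap_mul_self i j
  have hJT : Jᵀ = J := blockSwap_transpose i j
  have hcan : ∀ X : Matrix (Fin N × Fin n) (Fin N × Fin n) ℝ, J * (J * X) = X := fun X => by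
    rw [← Matrix.mul_assoc, hJJ, Matrix.one_mul]
  have hA : J * Ahat N n A G * J = Ahat N n A G := Ahat_conj i j A G
  have hAT : J * (Ahat N n A G)ᵀ * J = (Ahat N n A G)ᵀ := by
    have h := congrArg Matrix.transpose hA
    rwa [Matrix.transpose_mul, Matrix.transpose_mul, hJT, ← Matrix.mul_assoc] at h
  have hB' : ∀ m, Bblk N n n₁ B m = J * Bblk N n n₁ B (σ m) := fun m => by
    rw [hJdef, Bblk_conj, hσdef, Equiv.swap_apply_self]
  have hmulJ : ∀ X Y : Matrix (Fin N × Fin n) (Fin N × Fin n) ℝ,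
      (J * X * J) * (J * Y * J) = J * (X * Y) * J := fun X Y => by
    simp only [Matrix.mul_assoc, hcan]
  simp only [riccatiRHS]
  have h1 : (J * Pm (σ k) * J) * Ahat N n A G = J * (Pm (σ k) * Ahat N n A G) * J := by
    conv_lhs => rw [← hA]
    simp only [Matrix.mul_assoc, hcan]
  have h2 : (Ahat N n A G)ᵀ * (J * Pm (σ k) * J) = J * ((Ahat N n A G)ᵀ * Pm (σ k)) * J := by
    conv_lhs => rw [← hAT]
    simp only [Matrix.mul_assoc, hcan]
  have h3 : (∑ m, Bblk N n n₁ B m * R⁻¹ * (Bblk N n n₁ B m)ᵀ * (J * Pm (σ m) * J))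
      = J * (∑ m, Bblk N n n₁ B m * R⁻¹ * (Bblk N n n₁ B m)ᵀ * Pm m) * J := by
    have hterm : ∀ m, Bblk N n n₁ B m * R⁻¹ * (Bblk N n n₁ B m)ᵀ * (J * Pm (σ m) * J)
        = J * (Bblk N n n₁ B (σ m) * R⁻¹ * (Bblk N n n₁ B (σ m))ᵀ * Pm (σ m)) * J := by
      intro m
      conv_lhs => rw [hB' m]
      simp only [Matrix.transpose_mul, hJT, Matrix.mul_assoc, hcan]
    calc (∑ m, Bblk N n n₁ B m * R⁻¹ * (Bblk N n n₁ B m)ᵀ * (J * Pm (σ m) * J))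
        = ∑ m, J * (Bblk N n n₁ B (σ m) * R⁻¹ * (Bblk N n n₁ B (σ m))ᵀ * Pm (σ m)) * J :=
          Finset.sum_congr rfl (fun m _ => hterm m)
      _ = ∑ m, J * (Bblk N n n₁ B m * R⁻¹ * (Bblk N n n₁ B m)ᵀ * Pm m) * J :=
          Equiv.sum_comp σ (fun m => J * (Bblk N n n₁ B m * R⁻¹ * (Bblk N n n₁ B m)ᵀ * Pm m) * J)
      _ = J * (∑ m, Bblk N n n₁ B m * R⁻¹ * (Bblk N n n₁ B m)ᵀ * Pm m) * J := by
          rw [Matrix.mul_sum, Matrix.sum_mul]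
  have h4 : (∑ m, (J * Pm (σ m) * J) * (Bblk N n n₁ B m * R⁻¹ * (Bblk N n n₁ B m)ᵀ))
      = J * (∑ m, Pm m * (Bblk N n n₁ B m * R⁻¹ * (Bblk N n n₁ B m)ᵀ)) * J := by
    have hterm : ∀ m, (J * Pm (σ m) * J) * (Bblk N n n₁ B m * R⁻¹ * (Bblk N n n₁ B m)ᵀ)
        = J * (Pm (σ m) * (Bblk N n n₁ B (σ m) * R⁻¹ * (Bblk N n n₁ B (σ m))ᵀ)) * J := by
      intro m
      conv_lhs => rw [hB' m]
      simp only [Matrix.transpose_mul, hJT, Matrix.mul_assoc, hcan]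
    calc (∑ m, (J * Pm (σ m) * J) * (Bblk N n n₁ B m * R⁻¹ * (Bblk N n n₁ B m)ᵀ))
        = ∑ m, J * (Pm (σ m) * (Bblk N n n₁ B (σ m) * R⁻¹ * (Bblk N n n₁ B (σ m))ᵀ)) * J :=
          Finset.sum_congr rfl (fun m _ => hterm m)
      _ = ∑ m, J * (Pm m * (Bblk N n n₁ B m * R⁻¹ * (Bblk N n n₁ B m)ᵀ)) * J :=
          Equiv.sum_comp σ (fun m => J * (Pm m * (Bblk N n n₁ B m * R⁻¹ * (Bblk N n n₁ B m)ᵀ)) * J)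
      _ = J * (∑ m, Pm m * (Bblk N n n₁ B m * R⁻¹ * (Bblk N n n₁ B m)ᵀ)) * J := by
          rw [Matrix.mul_sum, Matrix.sum_mul]
  have h5 : (J * Pm (σ k) * J) * (Bblk N n n₁ B k * R⁻¹ * (Bblk N n n₁ B k)ᵀ) * (J * Pm (σ k) * J)
      = J * (Pm (σ k) * (Bblk N n n₁ B (σ k) * R⁻¹ * (Bblk N n n₁ B (σ k))ᵀ) * Pm (σ k)) * J := by
    conv_lhs => rw [hB' k]
    simp only [Matrix.transpose_mul, hJT, Matrix.mul_assoc, hcan]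
  rw [h3, h4, h2, Kquad_conj i j Γ Q k, h5, hmulJ, hmulJ]
  conv_lhs => rw [h1]
  simp only [Matrix.mul_add, Matrix.add_mul, Matrix.mul_neg, Matrix.neg_mul, Matrix.mul_sub,
    Matrix.sub_mul]
  rfl
section CD
variable {D : Type*} [NormedAddCommGroup D] [NormedSpace ℝ D]

lemma cd_const {m k : Type*} (M : Matrix m k ℝ) :
    ∀ p q, ContDiff ℝ 1 fun _ : D => M p q := fun _ _ => contDiff_const

lemma cd_add {m k : Type*} {g h : D → Matrix m k ℝ}
    (hg : ∀ p q, ContDiff ℝ 1 fun X => g X p q) (hh : ∀ p q, ContDiff ℝ 1 fun X => h X p q) :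
    ∀ p q, ContDiff ℝ 1 fun X => (g X + h X) p q := fun p q => by
  simp only [Matrix.add_apply]; exact (hg p q).add (hh p q)

lemma cd_neg {m k : Type*} {g : D → Matrix m k ℝ}
    (hg : ∀ p q, ContDiff ℝ 1 fun X => g X p q) :
    ∀ p q, ContDiff ℝ 1 fun X => (-g X) p q := fun p q => by
  simp only [Matrix.neg_apply]; exact (hg p q).neg

lemma cd_sub {m k : Type*} {g h : D → Matrix m k ℝ}
    (hg : ∀ p q, ContDiff ℝ 1 fun X => g X p q) (hh : ∀ p q, ContDiff ℝ 1 fun X => h X p q) :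
    ∀ p q, ContDiff ℝ 1 fun X => (g X - h X) p q := fun p q => by
  simp only [Matrix.sub_apply]; exact (hg p q).sub (hh p q)

lemma cd_mul {m k l : Type*} [Fintype k] {g : D → Matrix m k ℝ} {h : D → Matrix k l ℝ}
    (hg : ∀ p q, ContDiff ℝ 1 fun X => g X p q) (hh : ∀ p q, ContDiff ℝ 1 fun X => h X p q) :
    ∀ p q, ContDiff ℝ 1 fun X => (g X * h X) p q := fun p q => by
  simp only [Matrix.mul_apply]
  exact ContDiff.sum fun r _ => (hg p r).mul (hh r q)

lemma cd_sum {ι m k : Type*} {s : Finset ι} {g : ι → D → Matrix m k ℝ}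
    (hg : ∀ i p q, ContDiff ℝ 1 fun X => g i X p q) :
    ∀ p q, ContDiff ℝ 1 fun X => (∑ i ∈ s, g i X) p q := fun p q => by
  simp only [Matrix.sum_apply]
  exact ContDiff.sum fun i _ => hg i p q

end CD

section CDR
variable {N n n₁ : ℕ}

lemma cd_proj (m : Fin N) :
    ∀ p q, ContDiff ℝ 1
      fun X : Fin N → (Fin N × Fin n) → (Fin N × Fin n) → ℝ => Matrix.of (X m) p q := by
  intro p q
  have h1 : ContDiff ℝ 1 (fun X : Fin N → (Fin N × Fin n) → (Fin N × Fin n) → ℝ => X m) :=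
    contDiff_apply _ _ m
  have h2 : ContDiff ℝ 1 (fun Y : (Fin N × Fin n) → (Fin N × Fin n) → ℝ => Y p) :=
    contDiff_apply _ _ p
  have h3 : ContDiff ℝ 1 (fun Y : (Fin N × Fin n) → ℝ => Y q) := contDiff_apply _ _ q
  exact h3.comp (h2.comp h1)

lemma cd_riccati (A G Γ Q : Matrix (Fin n) (Fin n) ℝ) (B : Matrix (Fin n) (Fin n₁) ℝ)
    (R : Matrix (Fin n₁) (Fin n₁) ℝ) (k : Fin N) :
    ∀ p q, ContDiff ℝ 1
      fun X : Fin N → (Fin N × Fin n) → (Fin N × Fin n) → ℝ =>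
        riccatiRHS N n n₁ A G B R Γ Q (fun m => Matrix.of (X m)) k p q := by
  simp only [riccatiRHS]
  exact cd_sub
    (cd_sub
      (cd_add
        (cd_neg (cd_add (cd_mul (cd_proj k) (cd_const _)) (cd_mul (cd_const _) (cd_proj k))))
        (cd_add
          (cd_mul (cd_proj k)
            (cd_sum fun m => cd_mul (cd_const (Bblk N n n₁ B m * R⁻¹ * (Bblk N n n₁ B m)ᵀ))
              (cd_proj m)))
          (cd_mul
            (cd_sum fun m => cd_mul (cd_proj m)
              (cd_const (Bblk N n n₁ B m * R⁻¹ * (Bblk N n n₁ B m)ᵀ)))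
            (cd_proj k))))
      (cd_mul (cd_mul (cd_proj k) (cd_const _)) (cd_proj k)))
    (cd_const _)
end CDR


/-- Theorem 3 ii): if the coupled Riccati system of the `N`-player LQ game has a
solution `(P₁,…,P_N)` on `[0,T]`, then `Pᵢ(t) = J_{1i}ᵀ P₁(t) J_{1i}` for every
player `i` (block indices written `0`-based, player `1` being index `0`). -/
theorem stmt8 {N n n₁ : ℕ} [NeZero N] (T : ℝ) (hT : 0 < T)
    (A G Γ Γf Q Qf : Matrix (Fin n) (Fin n) ℝ)
    (B : Matrix (Fin n) (Fin n₁) ℝ) (R : Matrix (Fin n₁) (Fin n₁) ℝ)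
    (hQ : Q.PosSemidef) (hR : R.PosDef) (hQf : Qf.PosSemidef)
    (P : Fin N → ℝ → Matrix (Fin N × Fin n) (Fin N × Fin n) ℝ)
    (hPT : ∀ i, P i T = (Kblk N n Γf i)ᵀ * Qf * Kblk N n Γf i)
    (hP : ∀ i, ∀ t ∈ Icc (0:ℝ) T,
      MatrixHasDerivAt (P i) (riccatiRHS N n n₁ A G B R Γ Q (fun k => P k t) i) t) :
    ∀ i : Fin N, i ≠ 0 → ∀ t ∈ Icc (0:ℝ) T,
      P i t = (blockSwap N n 0 i)ᵀ * P 0 t * blockSwap N n 0 i := by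
  intro i _ t ht
  classical
  set σ : Equiv.Perm (Fin N) := Equiv.swap (0 : Fin N) i with hσdef
  set J : Matrix (Fin N × Fin n) (Fin N × Fin n) ℝ := blockSwap N n 0 i with hJdef
  let E := Fin N → (Fin N × Fin n) → (Fin N × Fin n) → ℝ
  let F : E → E := fun X m =>
    Matrix.of.symm (riccatiRHS N n n₁ A G B R Γ Q (fun r => Matrix.of (X r)) m)
  let x : ℝ → E := fun s m => Matrix.of.symm (P m s)
  let y : ℝ → E := fun s m =>
    Matrix.of.symm ((P (σ m) s).submatrix (swE N n 0 i) (swE N n 0 i))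
  have hderiv_x : ∀ s ∈ Icc (0:ℝ) T, HasDerivAt x (F (x s)) s := by
    intro s hs
    rw [hasDerivAt_pi]; intro m; rw [hasDerivAt_pi]; intro a; rw [hasDerivAt_pi]; intro b
    exact hP m s hs a b
  have hderiv_y : ∀ s ∈ Icc (0:ℝ) T, HasDerivAt y (F (y s)) s := by
    intro s hs
    rw [hasDerivAt_pi]; intro m; rw [hasDerivAt_pi]; intro a; rw [hasDerivAt_pi]; intro b
    have hbase := hP (σ m) s hs (swE N n 0 i a) (swE N n 0 i b)
    have hfun : (fun r => Matrix.of (y s r)) = fun r => J * P (σ r) s * J := by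
      funext r; exact (sandwich 0 i (P (σ r) s)).symm
    have hval : F (y s) m a b
        = riccatiRHS N n n₁ A G B R Γ Q (fun r => P r s) (σ m) (swE N n 0 i a) (swE N n 0 i b) := by
      show riccatiRHS N n n₁ A G B R Γ Q (fun r => Matrix.of (y s r)) m a b = _
      rw [hfun, rhs_conj 0 i A G Γ Q B R (fun r => P r s) m, sandwich]
      rfl
    rw [hval]
    exact hbase
  have hxyT : x T = y T := by
    funext m
    have hm : P m T = (P (σ m) T).submatrix (swE N n 0 i) (swE N n 0 i) := by
      calc P m T = (Kblk N n Γf m)ᵀ * Qf * Kblk N n Γf m := hPT m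
        _ = J * ((Kblk N n Γf (σ m))ᵀ * Qf * Kblk N n Γf (σ m)) * J := Kquad_conj 0 i Γf Qf m
        _ = ((Kblk N n Γf (σ m))ᵀ * Qf * Kblk N n Γf (σ m)).submatrix
              (swE N n 0 i) (swE N n 0 i) := sandwich 0 i _
        _ = (P (σ m) T).submatrix (swE N n 0 i) (swE N n 0 i) := by rw [hPT (σ m)]
    exact hm
  have hcx : ContinuousOn x (Icc 0 T) := fun s hs =>
    ((hderiv_x s hs).continuousAt).continuousWithinAt
  have hcy : ContinuousOn y (Icc 0 T) := fun s hs =>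
    ((hderiv_y s hs).continuousAt).continuousWithinAt
  obtain ⟨Cx, hCx⟩ := (isCompact_Icc : IsCompact (Icc (0:ℝ) T)).exists_bound_of_continuousOn hcx
  obtain ⟨Cy, hCy⟩ := (isCompact_Icc : IsCompact (Icc (0:ℝ) T)).exists_bound_of_continuousOn hcy
  have hF : ContDiff ℝ 1 F := by
    rw [contDiff_pi]; intro m
    rw [contDiff_pi]; intro a
    rw [contDiff_pi]; intro b
    exact cd_riccati A G Γ Q B R m a b
  have hFd : Differentiable ℝ F := hF.differentiable one_ne_zero
  have hFc : Continuous (fderiv ℝ F) := hF.continuous_fderiv one_ne_zero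
  haveI : ProperSpace E := by infer_instance
  obtain ⟨Cf, hCf⟩ :=
    (isCompact_closedBall (0 : E) (max Cx Cy)).exists_bound_of_continuousOn hFc.continuousOn
  have hlip : LipschitzOnWith Cf.toNNReal F (Metric.closedBall 0 (max Cx Cy)) := by
    apply Convex.lipschitzOnWith_of_nnnorm_hasFDerivWithin_le
      (f' := fun z => fderiv ℝ F z)
      (fun z _ => (hFd z).hasFDerivAt.hasFDerivWithinAt) ?_ (convex_closedBall _ _)
    intro z hz
    rw [← NNReal.coe_le_coe, coe_nnnorm, Real.coe_toNNReal']
    exact le_trans (hCf z hz) (le_max_left _ _)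
  have hmem_x : ∀ s ∈ Ioc (0:ℝ) T, x s ∈ Metric.closedBall (0:E) (max Cx Cy) := by
    intro s hs
    rw [Metric.mem_closedBall, dist_zero_right]
    exact le_trans (hCx s (Ioc_subset_Icc_self hs)) (le_max_left _ _)
  have hmem_y : ∀ s ∈ Ioc (0:ℝ) T, y s ∈ Metric.closedBall (0:E) (max Cx Cy) := by
    intro s hs
    rw [Metric.mem_closedBall, dist_zero_right]
    exact le_trans (hCy s (Ioc_subset_Icc_self hs)) (le_max_right _ _)
  have heq : EqOn x y (Icc 0 T) :=
    ODE_solution_unique_of_mem_Icc_left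
      (v := fun _ z => F z) (s := fun _ => Metric.closedBall 0 (max Cx Cy))
      (fun _ _ => hlip) hcx
      (fun s hs => (hderiv_x s (Ioc_subset_Icc_self hs)).hasDerivWithinAt) hmem_x
      hcy (fun s hs => (hderiv_y s (Ioc_subset_Icc_self hs)).hasDerivWithinAt) hmem_y
      hxyT
  have hxy : P i t = (P (σ i) t).submatrix (swE N n 0 i) (swE N n 0 i) := congrFun (heq ht) i
  rw [show σ i = 0 from Equiv.swap_apply_right 0 i] at hxy
  rw [show (blockSwap N n 0 i)ᵀ = J from blockSwap_transpose 0 i, sandwich 0 i]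
  exact hxy
end Aux2
end

section
/- Suppose the limiting non-symmetric Riccati ODE $\dot{\Lambda}_2 = \Lambda_1M\Lambda_2 + \Lambda_2M\Lambda_1 + \Lambda_2M\Lambda_2 - (\Lambda_1G + \Lambda_2(A+G) + A^T\Lambda_2) + Q\Gamma$, $\Lambda_2(T) = -Q_f\Gamma_f$, has a solution on $[0,T]$ (where $\Lambda_1$ solves the standard Riccati ODE). Then the rescaled finite-$N$ solutions satisfy $\sup_{0\le t\le T}(|\Pi_1 - \Lambda_1| + |N\Pi_2 - \Lambda_2| + |N^2\Pi_3 - \Lambda_3|) = O(1/N)$, where $\Lambda_3$ solves the corresponding linear ODE with $\Lambda_3(T) = \Gamma_f^TQ_f\Gamma_f$. -/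
open Matrix Set
open scoped ENNReal

def l1norm {m k : Type*} [Fintype m] [Fintype k] (Z : Matrix m k ℝ) : ℝ :=
  ∑ i, ∑ j, |Z i j|

section l1aux
variable {m k l : Type*} [Fintype m] [Fintype k] [Fintype l]

theorem l1norm_nonneg (Z : Matrix m k ℝ) : 0 ≤ l1norm Z :=
  Finset.sum_nonneg fun _ _ => Finset.sum_nonneg fun _ _ => abs_nonneg _

theorem l1norm_zero : l1norm (0 : Matrix m k ℝ) = 0 := by
  unfold l1norm; simp

theorem l1norm_add_le (X Y : Matrix m k ℝ) : l1norm (X + Y) ≤ l1norm X + l1norm Y := by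
  unfold l1norm
  rw [← Finset.sum_add_distrib]
  refine Finset.sum_le_sum fun i _ => ?_
  rw [← Finset.sum_add_distrib]
  exact Finset.sum_le_sum fun j _ => abs_add_le _ _

theorem l1norm_neg (X : Matrix m k ℝ) : l1norm (-X) = l1norm X := by
  unfold l1norm; simp

theorem l1norm_sub_le (X Y : Matrix m k ℝ) : l1norm (X - Y) ≤ l1norm X + l1norm Y := by
  rw [sub_eq_add_neg]
  exact (l1norm_add_le _ _).trans (by rw [l1norm_neg])

theorem l1norm_smul (c : ℝ) (X : Matrix m k ℝ) : l1norm (c • X) = |c| * l1norm X := by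
  unfold l1norm
  simp [abs_mul, Finset.mul_sum]

theorem l1norm_transpose (X : Matrix m k ℝ) : l1norm Xᵀ = l1norm X := by
  unfold l1norm
  rw [Finset.sum_comm]
  rfl

theorem l1norm_mul_le (X : Matrix m k ℝ) (Y : Matrix k l ℝ) :
    l1norm (X * Y) ≤ l1norm X * l1norm Y := by
  unfold l1norm
  calc ∑ i, ∑ j, |(X * Y) i j| ≤ ∑ i, ∑ j, ∑ p, |X i p| * |Y p j| := by
        refine Finset.sum_le_sum fun i _ => Finset.sum_le_sum fun j _ => ?_
        rw [Matrix.mul_apply]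
        refine (Finset.abs_sum_le_sum_abs _ _).trans ?_
        exact Finset.sum_le_sum fun p _ => (abs_mul _ _).le
    _ = ∑ i, ∑ p, |X i p| * ∑ j, |Y p j| := by
        refine Finset.sum_congr rfl fun i _ => ?_
        rw [Finset.sum_comm]
        simp [Finset.mul_sum]
    _ ≤ ∑ i, ∑ p, |X i p| * (∑ q, ∑ j, |Y q j|) := by
        refine Finset.sum_le_sum fun i _ => Finset.sum_le_sum fun p _ => ?_
        refine mul_le_mul_of_nonneg_left ?_ (abs_nonneg _)
        exact Finset.single_le_sum (fun q (_ : q ∈ Finset.univ) =>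
          Finset.sum_nonneg fun j _ => abs_nonneg (Y q j)) (Finset.mem_univ p)
    _ = (∑ i, ∑ p, |X i p|) * (∑ q, ∑ j, |Y q j|) := by
        rw [Finset.sum_mul]
        exact Finset.sum_congr rfl fun i _ => (Finset.sum_mul _ _ _).symm

theorem l1norm_pair_le {X : Matrix m k ℝ} {Y : Matrix k l ℝ} {x y : ℝ}
    (hX : l1norm X ≤ x) (hY : l1norm Y ≤ y) : l1norm (X * Y) ≤ x * y :=
  (l1norm_mul_le X Y).trans
    (mul_le_mul hX hY (l1norm_nonneg _) ((l1norm_nonneg _).trans hX))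

theorem l1norm_trip_le {X : Matrix m k ℝ} {Y : Matrix k l ℝ} {l' : Type*} [Fintype l']
    {Z : Matrix l l' ℝ} {x y z : ℝ}
    (hX : l1norm X ≤ x) (hY : l1norm Y ≤ y) (hZ : l1norm Z ≤ z) :
    l1norm (X * Y * Z) ≤ x * y * z :=
  l1norm_pair_le (l1norm_pair_le hX hY) hZ

end l1aux

abbrev Esp (n : ℕ) := PiLp 1 (fun _ : Fin 3 × Fin n × Fin n => ℝ)

noncomputable def pack {n : ℕ} (M1 M2 M3 : Matrix (Fin n) (Fin n) ℝ) : Esp n :=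
  (WithLp.equiv 1 _).symm fun p => ![M1, M2, M3] p.1 p.2.1 p.2.2

theorem pack_norm {n : ℕ} (M1 M2 M3 : Matrix (Fin n) (Fin n) ℝ) :
    ‖pack M1 M2 M3‖ = l1norm M1 + l1norm M2 + l1norm M3 := by
  rw [PiLp.norm_eq_sum (by norm_num : (0:ℝ) < (1:ℝ≥0∞).toReal)]
  simp only [ENNReal.toReal_one, Real.rpow_one, one_div_one]
  rw [Fintype.sum_prod_type, Fin.sum_univ_three]
  simp only [pack, WithLp.equiv_symm_apply, PiLp.toLp_apply]
  unfold l1norm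
  simp [Real.norm_eq_abs, Fintype.sum_prod_type, Matrix.cons_val_zero, Matrix.cons_val_one]

theorem pack_hasDerivAt {n : ℕ} {f1 f2 f3 : ℝ → Matrix (Fin n) (Fin n) ℝ}
    {v1 v2 v3 : Matrix (Fin n) (Fin n) ℝ} {t : ℝ}
    (h1 : MatrixHasDerivAt f1 v1 t) (h2 : MatrixHasDerivAt f2 v2 t)
    (h3 : MatrixHasDerivAt f3 v3 t) :
    HasDerivAt (fun s => pack (f1 s) (f2 s) (f3 s)) (pack v1 v2 v3) t := by
  have key : HasDerivAt
      (fun s => (fun p : Fin 3 × Fin n × Fin n => ![f1 s, f2 s, f3 s] p.1 p.2.1 p.2.2))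
      (fun p : Fin 3 × Fin n × Fin n => ![v1, v2, v3] p.1 p.2.1 p.2.2) t := by
    rw [hasDerivAt_pi]
    rintro ⟨i, j, k⟩
    fin_cases i
    · exact h1 j k
    · exact h2 j k
    · exact h3 j k
  exact ((PiLp.continuousLinearEquiv 1 ℝ
    (fun _ : Fin 3 × Fin n × Fin n => ℝ)).symm.toContinuousLinearMap.hasFDerivAt).comp_hasDerivAt
      t key

theorem MHD_sub {m k : Type*} [Fintype m] [Fintype k] {f g : ℝ → Matrix m k ℝ}
    {v w : Matrix m k ℝ} {t : ℝ}
    (hf : MatrixHasDerivAt f v t) (hg : MatrixHasDerivAt g w t) :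
    MatrixHasDerivAt (fun s => f s - g s) (v - w) t := fun i j => by
  simpa [Matrix.sub_apply, Pi.sub_def] using (hf i j).sub (hg i j)

theorem MHD_smul_sub {m k : Type*} [Fintype m] [Fintype k] {f g : ℝ → Matrix m k ℝ}
    {v w : Matrix m k ℝ} {t : ℝ} (c : ℝ)
    (hf : MatrixHasDerivAt f v t) (hg : MatrixHasDerivAt g w t) :
    MatrixHasDerivAt (fun s => c • f s - g s) (c • v - w) t := fun i j => by
  simpa [Matrix.sub_apply, Matrix.smul_apply, smul_eq_mul, Pi.sub_def] using
    ((hf i j).const_mul c).sub (hg i j)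

set_option maxHeartbeats 1000000 in
theorem term_bound {n : ℕ} (R c : ℝ) (hR : 2 ≤ R) (hc1 : 1 ≤ c)
    (Γf Qf : Matrix (Fin n) (Fin n) ℝ)
    (hΓfb : l1norm Γf ≤ c) (hQfb : l1norm Qf ≤ c) :
    l1norm ((1 - R⁻¹ • Γfᵀ) * Qf * (1 - R⁻¹ • Γf) - Qf)
      + l1norm (R • -((1 - R⁻¹ • Γfᵀ) * Qf * (R⁻¹ • Γf)) - -(Qf * Γf))
      + l1norm ((R^2) • ((R⁻¹ • Γfᵀ) * Qf * (R⁻¹ • Γf)) - Γfᵀ * Qf * Γf)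
      ≤ 4 * c ^ 3 * R⁻¹ := by
  have hR0 : (0:ℝ) < R := by linarith
  have hRne : R ≠ 0 := ne_of_gt hR0
  have hν0 : (0:ℝ) < R⁻¹ := inv_pos.mpr hR0
  have hν1 : R⁻¹ ≤ 1 := by rw [inv_le_one_iff₀]; right; linarith
  have hc0 : (0:ℝ) < c := by linarith
  have hΓftb : l1norm Γfᵀ ≤ c := by rw [l1norm_transpose]; exact hΓfb
  have hid1 : (1 - R⁻¹ • Γfᵀ) * Qf * (1 - R⁻¹ • Γf) - Qf
      = -(R⁻¹ • (Γfᵀ * Qf)) - R⁻¹ • (Qf * Γf) + (R⁻¹ * R⁻¹) • (Γfᵀ * Qf * Γf) := by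
    simp only [Matrix.mul_add, Matrix.add_mul, Matrix.mul_sub, Matrix.sub_mul,
      Matrix.mul_smul, Matrix.smul_mul, Matrix.mul_one, Matrix.one_mul,
      smul_smul, smul_sub, smul_add]
    match_scalars <;> field_simp <;> ring
  have hid2 : R • -((1 - R⁻¹ • Γfᵀ) * Qf * (R⁻¹ • Γf)) - -(Qf * Γf)
      = R⁻¹ • (Γfᵀ * Qf * Γf) := by
    simp only [Matrix.mul_add, Matrix.add_mul, Matrix.mul_sub, Matrix.sub_mul,
      Matrix.mul_smul, Matrix.smul_mul, Matrix.mul_one, Matrix.one_mul,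
      smul_smul, smul_sub, smul_add, smul_neg]
    match_scalars <;> field_simp <;> ring
  have hid3 : (R^2) • ((R⁻¹ • Γfᵀ) * Qf * (R⁻¹ • Γf)) - Γfᵀ * Qf * Γf
      = (0 : Matrix (Fin n) (Fin n) ℝ) := by
    simp only [Matrix.mul_smul, Matrix.smul_mul, smul_smul]
    match_scalars <;> field_simp <;> ring
  rw [hid1, hid2, hid3, l1norm_zero]
  have r1 : l1norm (R⁻¹ • (Γfᵀ * Qf)) ≤ c * c * R⁻¹ := by
    rw [l1norm_smul, abs_of_pos hν0]
    have h := l1norm_pair_le hΓftb hQfb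
    nlinarith [l1norm_nonneg (Γfᵀ * Qf)]
  have r2 : l1norm (R⁻¹ • (Qf * Γf)) ≤ c * c * R⁻¹ := by
    rw [l1norm_smul, abs_of_pos hν0]
    have h := l1norm_pair_le hQfb hΓfb
    nlinarith [l1norm_nonneg (Qf * Γf)]
  have r3 : l1norm ((R⁻¹ * R⁻¹) • (Γfᵀ * Qf * Γf)) ≤ c * c * c * (R⁻¹ * R⁻¹) := by
    rw [l1norm_smul, abs_of_pos (mul_pos hν0 hν0)]
    have h := l1norm_trip_le hΓftb hQfb hΓfb
    nlinarith [l1norm_nonneg (Γfᵀ * Qf * Γf)]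
  have r4 : l1norm (R⁻¹ • (Γfᵀ * Qf * Γf)) ≤ c * c * c * R⁻¹ := by
    rw [l1norm_smul, abs_of_pos hν0]
    have h := l1norm_trip_le hΓftb hQfb hΓfb
    nlinarith [l1norm_nonneg (Γfᵀ * Qf * Γf)]
  have h1 := l1norm_add_le (-(R⁻¹ • (Γfᵀ * Qf)) - R⁻¹ • (Qf * Γf))
    ((R⁻¹ * R⁻¹) • (Γfᵀ * Qf * Γf))
  have h2 := l1norm_sub_le (-(R⁻¹ • (Γfᵀ * Qf))) (R⁻¹ • (Qf * Γf))
  have h3 := l1norm_neg (R⁻¹ • (Γfᵀ * Qf))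
  have hνν : R⁻¹ * R⁻¹ ≤ R⁻¹ := by nlinarith
  have hmono1 : c * c * c * (R⁻¹ * R⁻¹) ≤ c * c * c * R⁻¹ :=
    mul_le_mul_of_nonneg_left hνν (by positivity)
  have hcc : c * c * R⁻¹ ≤ c * c * c * R⁻¹ := by
    nlinarith [mul_nonneg (mul_nonneg (mul_nonneg hc0.le hc0.le) hν0.le)
      (sub_nonneg.mpr hc1)]
  linarith [h1, h2, h3, r1, r2, r3, r4, hmono1, hcc]

set_option maxHeartbeats 4000000 in
set_option maxRecDepth 100000 in
theorem key_bound {n : ℕ} (R c : ℝ) (hR : 2 ≤ R) (hc1 : 1 ≤ c)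
    (A G Γ Q M P1 P2 P3 L1 L2 L3 : Matrix (Fin n) (Fin n) ℝ)
    (hAb : l1norm A ≤ c) (hGb : l1norm G ≤ c) (hΓb : l1norm Γ ≤ c)
    (hQb : l1norm Q ≤ c) (hMb : l1norm M ≤ c)
    (hL1b : l1norm L1 ≤ c) (hL2b : l1norm L2 ≤ c) (hL3b : l1norm L3 ≤ c)
    (hsmall : l1norm (P1 - L1) + l1norm (R • P2 - L2) + l1norm (R ^ 2 • P3 - L3) ≤ 1) :
    l1norm ((P1 * M * P1
        + (R - 1) • (P2 * M * P2 + P2ᵀ * M * P2ᵀ)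
        - (P1 * (A + R⁻¹ • G) + (Aᵀ + R⁻¹ • Gᵀ) * P1)
        - (1 - R⁻¹) • (P2 * G + Gᵀ * P2ᵀ)
        - (1 - R⁻¹ • Γᵀ) * Q * (1 - R⁻¹ • Γ))
      - (L1 * M * L1 - (L1 * A + Aᵀ * L1) - Q))
      + l1norm (R • (P1 * M * P2 + P2 * M * P1 + P2ᵀ * M * P3
        + (R - 2) • (P2 * M * P2 + P2ᵀ * M * P3)
        - (P1 * (R⁻¹ • G) + (R⁻¹ • Gᵀ) * P3
            + ((R - 2) / R) • (Gᵀ * P3)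
            + P2 * (A + ((R - 1) / R) • G)
            + (Aᵀ + R⁻¹ • Gᵀ) * P2)
        + (1 - R⁻¹ • Γᵀ) * Q * (R⁻¹ • Γ))
      - (L1 * M * L2 + L2 * M * L1 + L2 * M * L2
        - (L1 * G + L2 * (A + G) + Aᵀ * L2) + Q * Γ))
      + l1norm ((R ^ 2) • (P2ᵀ * M * P2 + P3 * M * P1 + P1 * M * P3
        + (R - 2) • (P3 * M * P2 + P2ᵀ * M * P3)
        - (R⁻¹ • (P2ᵀ * G + Gᵀ * P2)
            + P3 * (A + R⁻¹ • G) + (Aᵀ + R⁻¹ • Gᵀ) * P3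
            + ((R - 2) / R) • (P3 * G + Gᵀ * P3))
        - (R⁻¹ • Γᵀ) * Q * (R⁻¹ • Γ))
      - (L2ᵀ * M * L2 + L3 * M * L1 + L1 * M * L3
        + L3 * M * L2 + L2ᵀ * M * L3
        - (L2ᵀ * G + Gᵀ * L2 + L3 * (A + G) + (Aᵀ + Gᵀ) * L3)
        - Γᵀ * Q * Γ))
      ≤ (12 * c ^ 2 + 5 * c) * (l1norm (P1 - L1) + l1norm (R • P2 - L2) + l1norm (R ^ 2 • P3 - L3))
        + (40 * c ^ 3 + 20 * c ^ 2) * R⁻¹ := by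
  have hR0 : (0:ℝ) < R := by linarith
  have hRne : R ≠ 0 := ne_of_gt hR0
  have hν0 : (0:ℝ) < R⁻¹ := inv_pos.mpr hR0
  have hν1 : R⁻¹ ≤ 1 := by rw [inv_le_one_iff₀]; right; linarith
  have hνν : R⁻¹ * R⁻¹ ≤ R⁻¹ := by nlinarith
  have hc0 : (0:ℝ) < c := by linarith
  have hAtb : l1norm Aᵀ ≤ c := by rw [l1norm_transpose]; exact hAb
  have hGtb : l1norm Gᵀ ≤ c := by rw [l1norm_transpose]; exact hGb
  have hΓtb : l1norm Γᵀ ≤ c := by rw [l1norm_transpose]; exact hΓb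
  have hL2tb : l1norm L2ᵀ ≤ c := by rw [l1norm_transpose]; exact hL2b
  have hE1n : 0 ≤ l1norm (P1 - L1) := l1norm_nonneg _
  have hE2n : 0 ≤ l1norm (R • P2 - L2) := l1norm_nonneg _
  have hE3n : 0 ≤ l1norm (R ^ 2 • P3 - L3) := l1norm_nonneg _
  have he1 : l1norm (P1 - L1) ≤ 1 := by linarith
  have he2 : l1norm (R • P2 - L2) ≤ 1 := by linarith
  have he3 : l1norm (R ^ 2 • P3 - L3) ≤ 1 := by linarith
  have hz2t : l1norm (R • P2 - L2)ᵀ = l1norm (R • P2 - L2) := l1norm_transpose _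
  have hP1b : l1norm P1 ≤ 2 * c := by
    have h := l1norm_add_le (P1 - L1) L1
    rw [sub_add_cancel] at h
    linarith
  have hY2b : l1norm (R • P2) ≤ 2 * c := by
    have h := l1norm_add_le (R • P2 - L2) L2
    rw [sub_add_cancel] at h
    linarith
  have hY3b : l1norm (R ^ 2 • P3) ≤ 2 * c := by
    have h := l1norm_add_le (R ^ 2 • P3 - L3) L3
    rw [sub_add_cancel] at h
    linarith
  have hY2tb : l1norm (R • P2)ᵀ ≤ 2 * c := by rw [l1norm_transpose]; exact hY2b
  have hP2b : l1norm P2 ≤ 2 * c * R⁻¹ := by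
    have h1 : l1norm (R • P2) = R * l1norm P2 := by rw [l1norm_smul, abs_of_pos hR0]
    have h2 : R⁻¹ * (R * l1norm P2) = l1norm P2 := by field_simp
    have h3 : R⁻¹ * (R * l1norm P2) ≤ R⁻¹ * (2 * c) := by
      rw [← h1] at *
      exact mul_le_mul_of_nonneg_left hY2b hν0.le
    rw [h2] at h3
    linarith
  have hP2tb : l1norm P2ᵀ ≤ 2 * c * R⁻¹ := by rw [l1norm_transpose]; exact hP2b
  have hd1 : ((P1 * M * P1
        + (R - 1) • (P2 * M * P2 + P2ᵀ * M * P2ᵀ)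
        - (P1 * (A + R⁻¹ • G) + (Aᵀ + R⁻¹ • Gᵀ) * P1)
        - (1 - R⁻¹) • (P2 * G + Gᵀ * P2ᵀ)
        - (1 - R⁻¹ • Γᵀ) * Q * (1 - R⁻¹ • Γ))
      - (L1 * M * L1 - (L1 * A + Aᵀ * L1) - Q))
      = ((P1 - L1) * M * P1 + L1 * M * (P1 - L1)) + ((R - 1) • (P2 * M * P2 + P2ᵀ * M * P2ᵀ)) + (-((P1 - L1) * A + Aᵀ * (P1 - L1))) + (-(R⁻¹ • (P1 * G + Gᵀ * P1)))
        + (-((1 - R⁻¹) • (P2 * G + Gᵀ * P2ᵀ))) + (R⁻¹ • (Γᵀ * Q + Q * Γ) - (R⁻¹ * R⁻¹) • (Γᵀ * Q * Γ)) := by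
    simp only [Matrix.mul_add, Matrix.add_mul, Matrix.mul_sub, Matrix.sub_mul,
      Matrix.mul_smul, Matrix.smul_mul, Matrix.mul_one, Matrix.one_mul,
      Matrix.transpose_sub, Matrix.transpose_smul, smul_smul, smul_sub, smul_add, smul_neg]
    match_scalars <;> field_simp <;> ring
  have hd2 : (R • (P1 * M * P2 + P2 * M * P1 + P2ᵀ * M * P3
        + (R - 2) • (P2 * M * P2 + P2ᵀ * M * P3)
        - (P1 * (R⁻¹ • G) + (R⁻¹ • Gᵀ) * P3
            + ((R - 2) / R) • (Gᵀ * P3)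
            + P2 * (A + ((R - 1) / R) • G)
            + (Aᵀ + R⁻¹ • Gᵀ) * P2)
        + (1 - R⁻¹ • Γᵀ) * Q * (R⁻¹ • Γ))
      - (L1 * M * L2 + L2 * M * L1 + L2 * M * L2
        - (L1 * G + L2 * (A + G) + Aᵀ * L2) + Q * Γ))
      = ((P1 - L1) * M * (R • P2) + L1 * M * (R • P2 - L2)) + ((R • P2 - L2) * M * P1 + L2 * M * (P1 - L1)) + ((R • P2 - L2) * M * (R • P2) + L2 * M * (R • P2 - L2) - (2 * R⁻¹) • ((R • P2) * M * (R • P2))) + (((R - 1) / R ^ 2) • ((R • P2)ᵀ * M * (R ^ 2 • P3)))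
        + (-((P1 - L1) * G)) + (-(((R - 1) / R ^ 2) • (Gᵀ * (R ^ 2 • P3)))) + (-((R • P2 - L2) * A)) + (-((R • P2 - L2) * G) + R⁻¹ • ((R • P2) * G))
        + (-(Aᵀ * (R • P2 - L2))) + (-(R⁻¹ • (Gᵀ * (R • P2)))) + (-(R⁻¹ • (Γᵀ * Q * Γ))) := by
    simp only [Matrix.mul_add, Matrix.add_mul, Matrix.mul_sub, Matrix.sub_mul,
      Matrix.mul_smul, Matrix.smul_mul, Matrix.mul_one, Matrix.one_mul,
      Matrix.transpose_sub, Matrix.transpose_smul, smul_smul, smul_sub, smul_add, smul_neg]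
    match_scalars <;> field_simp <;> ring
  have hd3 : ((R ^ 2) • (P2ᵀ * M * P2 + P3 * M * P1 + P1 * M * P3
        + (R - 2) • (P3 * M * P2 + P2ᵀ * M * P3)
        - (R⁻¹ • (P2ᵀ * G + Gᵀ * P2)
            + P3 * (A + R⁻¹ • G) + (Aᵀ + R⁻¹ • Gᵀ) * P3
            + ((R - 2) / R) • (P3 * G + Gᵀ * P3))
        - (R⁻¹ • Γᵀ) * Q * (R⁻¹ • Γ))
      - (L2ᵀ * M * L2 + L3 * M * L1 + L1 * M * L3
        + L3 * M * L2 + L2ᵀ * M * L3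
        - (L2ᵀ * G + Gᵀ * L2 + L3 * (A + G) + (Aᵀ + Gᵀ) * L3)
        - Γᵀ * Q * Γ))
      = ((R • P2 - L2)ᵀ * M * (R • P2) + L2ᵀ * M * (R • P2 - L2)) + ((R ^ 2 • P3 - L3) * M * P1 + L3 * M * (P1 - L1)) + ((P1 - L1) * M * (R ^ 2 • P3) + L1 * M * (R ^ 2 • P3 - L3)) + ((R ^ 2 • P3 - L3) * M * (R • P2) + L3 * M * (R • P2 - L2) - (2 * R⁻¹) • ((R ^ 2 • P3) * M * (R • P2)))
        + ((R • P2 - L2)ᵀ * M * (R ^ 2 • P3) + L2ᵀ * M * (R ^ 2 • P3 - L3) - (2 * R⁻¹) • ((R • P2)ᵀ * M * (R ^ 2 • P3))) + (-((R • P2 - L2)ᵀ * G) - Gᵀ * (R • P2 - L2)) + (-((R ^ 2 • P3 - L3) * A) - Aᵀ * (R ^ 2 • P3 - L3)) + (-((R ^ 2 • P3 - L3) * G) + R⁻¹ • ((R ^ 2 • P3) * G))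
        + (-(Gᵀ * (R ^ 2 • P3 - L3)) + R⁻¹ • (Gᵀ * (R ^ 2 • P3))) := by
    simp only [Matrix.mul_add, Matrix.add_mul, Matrix.mul_sub, Matrix.sub_mul,
      Matrix.mul_smul, Matrix.smul_mul, Matrix.mul_one, Matrix.one_mul,
      Matrix.transpose_sub, Matrix.transpose_smul, smul_smul, smul_sub, smul_add, smul_neg]
    match_scalars <;> field_simp <;> ring
  have hcoef : (R - 1) / R ^ 2 ≤ R⁻¹ := by
    rw [div_le_iff₀ (by positivity)]
    have h : R⁻¹ * R ^ 2 = R := by field_simp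
    rw [h]; linarith
  have hb11 : l1norm ((P1 - L1) * M * P1 + L1 * M * (P1 - L1)) ≤ 3 * (c ^ 2 * l1norm (P1 - L1)) := by
    have t1 := l1norm_trip_le (le_refl (l1norm (P1 - L1))) hMb hP1b
    have t2 := l1norm_trip_le hL1b hMb (le_refl (l1norm (P1 - L1)))
    linarith [l1norm_add_le ((P1 - L1) * M * P1) (L1 * M * (P1 - L1))]
  have hb12 : l1norm ((R - 1) • (P2 * M * P2 + P2ᵀ * M * P2ᵀ)) ≤ 8 * (c ^ 3 * R⁻¹) := by
    rw [l1norm_smul, abs_of_pos (by linarith : (0:ℝ) < R - 1)]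
    have t1 := l1norm_trip_le hP2b hMb hP2b
    have t2 := l1norm_trip_le hP2tb hMb hP2tb
    have hadd := l1norm_add_le (P2 * M * P2) (P2ᵀ * M * P2ᵀ)
    have hinner : l1norm (P2 * M * P2 + P2ᵀ * M * P2ᵀ) ≤ 8 * (c ^ 3 * (R⁻¹ * R⁻¹)) := by
      linarith
    have hmul := mul_le_mul_of_nonneg_left hinner hR0.le
    have heq : R * (8 * (c ^ 3 * (R⁻¹ * R⁻¹))) = 8 * (c ^ 3 * R⁻¹) := by
      field_simp
    linarith [l1norm_nonneg (P2 * M * P2 + P2ᵀ * M * P2ᵀ)]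
  have hb13 : l1norm (-((P1 - L1) * A + Aᵀ * (P1 - L1))) ≤ 2 * (c * l1norm (P1 - L1)) := by
    rw [l1norm_neg]
    have t1 := l1norm_pair_le (le_refl (l1norm (P1 - L1))) hAb
    have t2 := l1norm_pair_le hAtb (le_refl (l1norm (P1 - L1)))
    linarith [l1norm_add_le ((P1 - L1) * A) (Aᵀ * (P1 - L1))]
  have hb14 : l1norm (-(R⁻¹ • (P1 * G + Gᵀ * P1))) ≤ 4 * (c ^ 2 * R⁻¹) := by
    rw [l1norm_neg, l1norm_smul, abs_of_pos hν0]
    have t1 := l1norm_pair_le hP1b hGb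
    have t2 := l1norm_pair_le hGtb hP1b
    have hadd := l1norm_add_le (P1 * G) (Gᵀ * P1)
    have hinner : l1norm (P1 * G + Gᵀ * P1) ≤ 4 * c ^ 2 := by nlinarith
    have hmul := mul_le_mul_of_nonneg_left hinner hν0.le
    linarith
  have hb15 : l1norm (-((1 - R⁻¹) • (P2 * G + Gᵀ * P2ᵀ))) ≤ 4 * (c ^ 2 * R⁻¹) := by
    rw [l1norm_neg, l1norm_smul, abs_of_nonneg (by linarith : (0:ℝ) ≤ 1 - R⁻¹)]
    have t1 := l1norm_pair_le hP2b hGb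
    have t2 := l1norm_pair_le hGtb hP2tb
    have hadd := l1norm_add_le (P2 * G) (Gᵀ * P2ᵀ)
    have hinner : l1norm (P2 * G + Gᵀ * P2ᵀ) ≤ 4 * (c ^ 2 * R⁻¹) := by linarith
    linarith [mul_nonneg hν0.le (l1norm_nonneg (P2 * G + Gᵀ * P2ᵀ)),
      l1norm_nonneg (P2 * G + Gᵀ * P2ᵀ)]
  have hb16 : l1norm (R⁻¹ • (Γᵀ * Q + Q * Γ) - (R⁻¹ * R⁻¹) • (Γᵀ * Q * Γ)) ≤ 2 * (c ^ 2 * R⁻¹) + c ^ 3 * R⁻¹ := by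
    have hsub := l1norm_sub_le (R⁻¹ • (Γᵀ * Q + Q * Γ)) ((R⁻¹ * R⁻¹) • (Γᵀ * Q * Γ))
    rw [l1norm_smul, l1norm_smul, abs_of_pos hν0, abs_of_pos (mul_pos hν0 hν0)] at hsub
    have t1 := l1norm_pair_le hΓtb hQb
    have t2 := l1norm_pair_le hQb hΓb
    have hadd := l1norm_add_le (Γᵀ * Q) (Q * Γ)
    have hinner1 : l1norm (Γᵀ * Q + Q * Γ) ≤ 2 * c ^ 2 := by nlinarith
    have t3 := l1norm_trip_le hΓtb hQb hΓb
    have hm1 := mul_le_mul_of_nonneg_left hinner1 hν0.le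
    have hm2 := mul_le_mul_of_nonneg_left t3 (mul_pos hν0 hν0).le
    have hm3 : R⁻¹ * R⁻¹ * (c * c * c) ≤ R⁻¹ * (c * c * c) :=
      mul_le_mul_of_nonneg_right hνν (by positivity)
    linarith
  have hb21 : l1norm ((P1 - L1) * M * (R • P2) + L1 * M * (R • P2 - L2)) ≤ 2 * (c ^ 2 * l1norm (P1 - L1)) + c ^ 2 * l1norm (R • P2 - L2) := by
    have t1 := l1norm_trip_le (le_refl (l1norm (P1 - L1))) hMb hY2b
    have t2 := l1norm_trip_le hL1b hMb (le_refl (l1norm (R • P2 - L2)))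
    linarith [l1norm_add_le ((P1 - L1) * M * (R • P2)) (L1 * M * (R • P2 - L2))]
  have hb22 : l1norm ((R • P2 - L2) * M * P1 + L2 * M * (P1 - L1)) ≤ 2 * (c ^ 2 * l1norm (R • P2 - L2)) + c ^ 2 * l1norm (P1 - L1) := by
    have t1 := l1norm_trip_le (le_refl (l1norm (R • P2 - L2))) hMb hP1b
    have t2 := l1norm_trip_le hL2b hMb (le_refl (l1norm (P1 - L1)))
    linarith [l1norm_add_le ((R • P2 - L2) * M * P1) (L2 * M * (P1 - L1))]
  have hb23 : l1norm ((R • P2 - L2) * M * (R • P2) + L2 * M * (R • P2 - L2) - (2 * R⁻¹) • ((R • P2) * M * (R • P2))) ≤ 3 * (c ^ 2 * l1norm (R • P2 - L2)) + 8 * (c ^ 3 * R⁻¹) := by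
    have hsub := l1norm_sub_le ((R • P2 - L2) * M * (R • P2) + L2 * M * (R • P2 - L2)) ((2 * R⁻¹) • ((R • P2) * M * (R • P2)))
    have hadd := l1norm_add_le ((R • P2 - L2) * M * (R • P2)) (L2 * M * (R • P2 - L2))
    have t1 := l1norm_trip_le (le_refl (l1norm (R • P2 - L2))) hMb hY2b
    have t2 := l1norm_trip_le hL2b hMb (le_refl (l1norm (R • P2 - L2)))
    have t3 := l1norm_trip_le hY2b hMb hY2b
    rw [l1norm_smul, abs_of_pos (by positivity : (0:ℝ) < 2 * R⁻¹)] at hsub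
    have hm := mul_le_mul_of_nonneg_left t3 (by positivity : (0:ℝ) ≤ 2 * R⁻¹)
    linarith
  have hb24 : l1norm (((R - 1) / R ^ 2) • ((R • P2)ᵀ * M * (R ^ 2 • P3))) ≤ 4 * (c ^ 3 * R⁻¹) := by
    rw [l1norm_smul, abs_of_nonneg (div_nonneg (by linarith) (by positivity))]
    have t := l1norm_trip_le hY2tb hMb hY3b
    have hm := mul_le_mul hcoef t (l1norm_nonneg _) hν0.le
    linarith
  have hb25 : l1norm (-((P1 - L1) * G)) ≤ c * l1norm (P1 - L1) := by
    rw [l1norm_neg]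
    linarith [l1norm_pair_le (le_refl (l1norm (P1 - L1))) hGb]
  have hb26 : l1norm (-(((R - 1) / R ^ 2) • (Gᵀ * (R ^ 2 • P3)))) ≤ 2 * (c ^ 2 * R⁻¹) := by
    rw [l1norm_neg, l1norm_smul, abs_of_nonneg (div_nonneg (by linarith) (by positivity))]
    have t := l1norm_pair_le hGtb hY3b
    have hm := mul_le_mul hcoef t (l1norm_nonneg _) hν0.le
    linarith
  have hb27 : l1norm (-((R • P2 - L2) * A)) ≤ c * l1norm (R • P2 - L2) := by
    rw [l1norm_neg]
    linarith [l1norm_pair_le (le_refl (l1norm (R • P2 - L2))) hAb]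
  have hb28 : l1norm (-((R • P2 - L2) * G) + R⁻¹ • ((R • P2) * G)) ≤ c * l1norm (R • P2 - L2) + 2 * (c ^ 2 * R⁻¹) := by
    have hadd := l1norm_add_le (-((R • P2 - L2) * G)) (R⁻¹ • ((R • P2) * G))
    rw [l1norm_neg, l1norm_smul, abs_of_pos hν0] at hadd
    have t1 := l1norm_pair_le (le_refl (l1norm (R • P2 - L2))) hGb
    have t2 := l1norm_pair_le hY2b hGb
    have hm := mul_le_mul_of_nonneg_left t2 hν0.le
    linarith
  have hb29 : l1norm (-(Aᵀ * (R • P2 - L2))) ≤ c * l1norm (R • P2 - L2) := by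
    rw [l1norm_neg]
    linarith [l1norm_pair_le hAtb (le_refl (l1norm (R • P2 - L2)))]
  have hb2a : l1norm (-(R⁻¹ • (Gᵀ * (R • P2)))) ≤ 2 * (c ^ 2 * R⁻¹) := by
    rw [l1norm_neg, l1norm_smul, abs_of_pos hν0]
    have t := l1norm_pair_le hGtb hY2b
    have hm := mul_le_mul_of_nonneg_left t hν0.le
    linarith
  have hb2b : l1norm (-(R⁻¹ • (Γᵀ * Q * Γ))) ≤ c ^ 3 * R⁻¹ := by
    rw [l1norm_neg, l1norm_smul, abs_of_pos hν0]
    have t := l1norm_trip_le hΓtb hQb hΓb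
    have hm := mul_le_mul_of_nonneg_left t hν0.le
    linarith
  have hb31 : l1norm ((R • P2 - L2)ᵀ * M * (R • P2) + L2ᵀ * M * (R • P2 - L2)) ≤ 3 * (c ^ 2 * l1norm (R • P2 - L2)) := by
    have t1 := l1norm_trip_le (le_of_eq hz2t) hMb hY2b
    have t2 := l1norm_trip_le hL2tb hMb (le_refl (l1norm (R • P2 - L2)))
    linarith [l1norm_add_le ((R • P2 - L2)ᵀ * M * (R • P2)) (L2ᵀ * M * (R • P2 - L2))]
  have hb32 : l1norm ((R ^ 2 • P3 - L3) * M * P1 + L3 * M * (P1 - L1)) ≤ 2 * (c ^ 2 * l1norm (R ^ 2 • P3 - L3)) + c ^ 2 * l1norm (P1 - L1) := by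
    have t1 := l1norm_trip_le (le_refl (l1norm (R ^ 2 • P3 - L3))) hMb hP1b
    have t2 := l1norm_trip_le hL3b hMb (le_refl (l1norm (P1 - L1)))
    linarith [l1norm_add_le ((R ^ 2 • P3 - L3) * M * P1) (L3 * M * (P1 - L1))]
  have hb33 : l1norm ((P1 - L1) * M * (R ^ 2 • P3) + L1 * M * (R ^ 2 • P3 - L3)) ≤ 2 * (c ^ 2 * l1norm (P1 - L1)) + c ^ 2 * l1norm (R ^ 2 • P3 - L3) := by
    have t1 := l1norm_trip_le (le_refl (l1norm (P1 - L1))) hMb hY3b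
    have t2 := l1norm_trip_le hL1b hMb (le_refl (l1norm (R ^ 2 • P3 - L3)))
    linarith [l1norm_add_le ((P1 - L1) * M * (R ^ 2 • P3)) (L1 * M * (R ^ 2 • P3 - L3))]
  have hb34 : l1norm ((R ^ 2 • P3 - L3) * M * (R • P2) + L3 * M * (R • P2 - L2) - (2 * R⁻¹) • ((R ^ 2 • P3) * M * (R • P2))) ≤ 2 * (c ^ 2 * l1norm (R ^ 2 • P3 - L3)) + c ^ 2 * l1norm (R • P2 - L2) + 8 * (c ^ 3 * R⁻¹) := by
    have hsub := l1norm_sub_le ((R ^ 2 • P3 - L3) * M * (R • P2) + L3 * M * (R • P2 - L2)) ((2 * R⁻¹) • ((R ^ 2 • P3) * M * (R • P2)))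
    have hadd := l1norm_add_le ((R ^ 2 • P3 - L3) * M * (R • P2)) (L3 * M * (R • P2 - L2))
    have t1 := l1norm_trip_le (le_refl (l1norm (R ^ 2 • P3 - L3))) hMb hY2b
    have t2 := l1norm_trip_le hL3b hMb (le_refl (l1norm (R • P2 - L2)))
    have t3 := l1norm_trip_le hY3b hMb hY2b
    rw [l1norm_smul, abs_of_pos (by positivity : (0:ℝ) < 2 * R⁻¹)] at hsub
    have hm := mul_le_mul_of_nonneg_left t3 (by positivity : (0:ℝ) ≤ 2 * R⁻¹)
    linarith
  have hb35 : l1norm ((R • P2 - L2)ᵀ * M * (R ^ 2 • P3) + L2ᵀ * M * (R ^ 2 • P3 - L3) - (2 * R⁻¹) • ((R • P2)ᵀ * M * (R ^ 2 • P3))) ≤ 2 * (c ^ 2 * l1norm (R • P2 - L2)) + c ^ 2 * l1norm (R ^ 2 • P3 - L3) + 8 * (c ^ 3 * R⁻¹) := by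
    have hsub := l1norm_sub_le ((R • P2 - L2)ᵀ * M * (R ^ 2 • P3) + L2ᵀ * M * (R ^ 2 • P3 - L3)) ((2 * R⁻¹) • ((R • P2)ᵀ * M * (R ^ 2 • P3)))
    have hadd := l1norm_add_le ((R • P2 - L2)ᵀ * M * (R ^ 2 • P3)) (L2ᵀ * M * (R ^ 2 • P3 - L3))
    have t1 := l1norm_trip_le (le_of_eq hz2t) hMb hY3b
    have t2 := l1norm_trip_le hL2tb hMb (le_refl (l1norm (R ^ 2 • P3 - L3)))
    have t3 := l1norm_trip_le hY2tb hMb hY3b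
    rw [l1norm_smul, abs_of_pos (by positivity : (0:ℝ) < 2 * R⁻¹)] at hsub
    have hm := mul_le_mul_of_nonneg_left t3 (by positivity : (0:ℝ) ≤ 2 * R⁻¹)
    linarith
  have hb36 : l1norm (-((R • P2 - L2)ᵀ * G) - Gᵀ * (R • P2 - L2)) ≤ 2 * (c * l1norm (R • P2 - L2)) := by
    have hsub := l1norm_sub_le (-((R • P2 - L2)ᵀ * G)) (Gᵀ * (R • P2 - L2))
    rw [l1norm_neg] at hsub
    have t1 := l1norm_pair_le (le_of_eq hz2t) hGb
    have t2 := l1norm_pair_le hGtb (le_refl (l1norm (R • P2 - L2)))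
    linarith
  have hb37 : l1norm (-((R ^ 2 • P3 - L3) * A) - Aᵀ * (R ^ 2 • P3 - L3)) ≤ 2 * (c * l1norm (R ^ 2 • P3 - L3)) := by
    have hsub := l1norm_sub_le (-((R ^ 2 • P3 - L3) * A)) (Aᵀ * (R ^ 2 • P3 - L3))
    rw [l1norm_neg] at hsub
    have t1 := l1norm_pair_le (le_refl (l1norm (R ^ 2 • P3 - L3))) hAb
    have t2 := l1norm_pair_le hAtb (le_refl (l1norm (R ^ 2 • P3 - L3)))
    linarith
  have hb38 : l1norm (-((R ^ 2 • P3 - L3) * G) + R⁻¹ • ((R ^ 2 • P3) * G)) ≤ c * l1norm (R ^ 2 • P3 - L3) + 2 * (c ^ 2 * R⁻¹) := by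
    have hadd := l1norm_add_le (-((R ^ 2 • P3 - L3) * G)) (R⁻¹ • ((R ^ 2 • P3) * G))
    rw [l1norm_neg, l1norm_smul, abs_of_pos hν0] at hadd
    have t1 := l1norm_pair_le (le_refl (l1norm (R ^ 2 • P3 - L3))) hGb
    have t2 := l1norm_pair_le hY3b hGb
    have hm := mul_le_mul_of_nonneg_left t2 hν0.le
    linarith
  have hb39 : l1norm (-(Gᵀ * (R ^ 2 • P3 - L3)) + R⁻¹ • (Gᵀ * (R ^ 2 • P3))) ≤ c * l1norm (R ^ 2 • P3 - L3) + 2 * (c ^ 2 * R⁻¹) := by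
    have hadd := l1norm_add_le (-(Gᵀ * (R ^ 2 • P3 - L3))) (R⁻¹ • (Gᵀ * (R ^ 2 • P3)))
    rw [l1norm_neg, l1norm_smul, abs_of_pos hν0] at hadd
    have t1 := l1norm_pair_le hGtb (le_refl (l1norm (R ^ 2 • P3 - L3)))
    have t2 := l1norm_pair_le hGtb hY3b
    have hm := mul_le_mul_of_nonneg_left t2 hν0.le
    linarith
  have u11 := l1norm_add_le (((P1 - L1) * M * P1 + L1 * M * (P1 - L1))) ((R - 1) • (P2 * M * P2 + P2ᵀ * M * P2ᵀ))
  have u12 := l1norm_add_le (((P1 - L1) * M * P1 + L1 * M * (P1 - L1)) + ((R - 1) • (P2 * M * P2 + P2ᵀ * M * P2ᵀ))) (-((P1 - L1) * A + Aᵀ * (P1 - L1)))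
  have u13 := l1norm_add_le (((P1 - L1) * M * P1 + L1 * M * (P1 - L1)) + ((R - 1) • (P2 * M * P2 + P2ᵀ * M * P2ᵀ)) + (-((P1 - L1) * A + Aᵀ * (P1 - L1)))) (-(R⁻¹ • (P1 * G + Gᵀ * P1)))
  have u14 := l1norm_add_le (((P1 - L1) * M * P1 + L1 * M * (P1 - L1)) + ((R - 1) • (P2 * M * P2 + P2ᵀ * M * P2ᵀ)) + (-((P1 - L1) * A + Aᵀ * (P1 - L1))) + (-(R⁻¹ • (P1 * G + Gᵀ * P1)))) (-((1 - R⁻¹) • (P2 * G + Gᵀ * P2ᵀ)))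
  have u15 := l1norm_add_le (((P1 - L1) * M * P1 + L1 * M * (P1 - L1)) + ((R - 1) • (P2 * M * P2 + P2ᵀ * M * P2ᵀ)) + (-((P1 - L1) * A + Aᵀ * (P1 - L1))) + (-(R⁻¹ • (P1 * G + Gᵀ * P1))) + (-((1 - R⁻¹) • (P2 * G + Gᵀ * P2ᵀ)))) (R⁻¹ • (Γᵀ * Q + Q * Γ) - (R⁻¹ * R⁻¹) • (Γᵀ * Q * Γ))
  have u21 := l1norm_add_le (((P1 - L1) * M * (R • P2) + L1 * M * (R • P2 - L2))) ((R • P2 - L2) * M * P1 + L2 * M * (P1 - L1))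
  have u22 := l1norm_add_le (((P1 - L1) * M * (R • P2) + L1 * M * (R • P2 - L2)) + ((R • P2 - L2) * M * P1 + L2 * M * (P1 - L1))) ((R • P2 - L2) * M * (R • P2) + L2 * M * (R • P2 - L2) - (2 * R⁻¹) • ((R • P2) * M * (R • P2)))
  have u23 := l1norm_add_le (((P1 - L1) * M * (R • P2) + L1 * M * (R • P2 - L2)) + ((R • P2 - L2) * M * P1 + L2 * M * (P1 - L1)) + ((R • P2 - L2) * M * (R • P2) + L2 * M * (R • P2 - L2) - (2 * R⁻¹) • ((R • P2) * M * (R • P2)))) (((R - 1) / R ^ 2) • ((R • P2)ᵀ * M * (R ^ 2 • P3)))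
  have u24 := l1norm_add_le (((P1 - L1) * M * (R • P2) + L1 * M * (R • P2 - L2)) + ((R • P2 - L2) * M * P1 + L2 * M * (P1 - L1)) + ((R • P2 - L2) * M * (R • P2) + L2 * M * (R • P2 - L2) - (2 * R⁻¹) • ((R • P2) * M * (R • P2))) + (((R - 1) / R ^ 2) • ((R • P2)ᵀ * M * (R ^ 2 • P3)))) (-((P1 - L1) * G))
  have u25 := l1norm_add_le (((P1 - L1) * M * (R • P2) + L1 * M * (R • P2 - L2)) + ((R • P2 - L2) * M * P1 + L2 * M * (P1 - L1)) + ((R • P2 - L2) * M * (R • P2) + L2 * M * (R • P2 - L2) - (2 * R⁻¹) • ((R • P2) * M * (R • P2))) + (((R - 1) / R ^ 2) • ((R • P2)ᵀ * M * (R ^ 2 • P3))) + (-((P1 - L1) * G))) (-(((R - 1) / R ^ 2) • (Gᵀ * (R ^ 2 • P3))))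
  have u26 := l1norm_add_le (((P1 - L1) * M * (R • P2) + L1 * M * (R • P2 - L2)) + ((R • P2 - L2) * M * P1 + L2 * M * (P1 - L1)) + ((R • P2 - L2) * M * (R • P2) + L2 * M * (R • P2 - L2) - (2 * R⁻¹) • ((R • P2) * M * (R • P2))) + (((R - 1) / R ^ 2) • ((R • P2)ᵀ * M * (R ^ 2 • P3))) + (-((P1 - L1) * G)) + (-(((R - 1) / R ^ 2) • (Gᵀ * (R ^ 2 • P3))))) (-((R • P2 - L2) * A))
  have u27 := l1norm_add_le (((P1 - L1) * M * (R • P2) + L1 * M * (R • P2 - L2)) + ((R • P2 - L2) * M * P1 + L2 * M * (P1 - L1)) + ((R • P2 - L2) * M * (R • P2) + L2 * M * (R • P2 - L2) - (2 * R⁻¹) • ((R • P2) * M * (R • P2))) + (((R - 1) / R ^ 2) • ((R • P2)ᵀ * M * (R ^ 2 • P3))) + (-((P1 - L1) * G)) + (-(((R - 1) / R ^ 2) • (Gᵀ * (R ^ 2 • P3)))) + (-((R • P2 - L2) * A))) (-((R • P2 - L2) * G) + R⁻¹ • ((R • P2) * G))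
  have u28 := l1norm_add_le (((P1 - L1) * M * (R • P2) + L1 * M * (R • P2 - L2)) + ((R • P2 - L2) * M * P1 + L2 * M * (P1 - L1)) + ((R • P2 - L2) * M * (R • P2) + L2 * M * (R • P2 - L2) - (2 * R⁻¹) • ((R • P2) * M * (R • P2))) + (((R - 1) / R ^ 2) • ((R • P2)ᵀ * M * (R ^ 2 • P3))) + (-((P1 - L1) * G)) + (-(((R - 1) / R ^ 2) • (Gᵀ * (R ^ 2 • P3)))) + (-((R • P2 - L2) * A)) + (-((R • P2 - L2) * G) + R⁻¹ • ((R • P2) * G))) (-(Aᵀ * (R • P2 - L2)))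
  have u29 := l1norm_add_le (((P1 - L1) * M * (R • P2) + L1 * M * (R • P2 - L2)) + ((R • P2 - L2) * M * P1 + L2 * M * (P1 - L1)) + ((R • P2 - L2) * M * (R • P2) + L2 * M * (R • P2 - L2) - (2 * R⁻¹) • ((R • P2) * M * (R • P2))) + (((R - 1) / R ^ 2) • ((R • P2)ᵀ * M * (R ^ 2 • P3))) + (-((P1 - L1) * G)) + (-(((R - 1) / R ^ 2) • (Gᵀ * (R ^ 2 • P3)))) + (-((R • P2 - L2) * A)) + (-((R • P2 - L2) * G) + R⁻¹ • ((R • P2) * G)) + (-(Aᵀ * (R • P2 - L2)))) (-(R⁻¹ • (Gᵀ * (R • P2))))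
  have u210 := l1norm_add_le (((P1 - L1) * M * (R • P2) + L1 * M * (R • P2 - L2)) + ((R • P2 - L2) * M * P1 + L2 * M * (P1 - L1)) + ((R • P2 - L2) * M * (R • P2) + L2 * M * (R • P2 - L2) - (2 * R⁻¹) • ((R • P2) * M * (R • P2))) + (((R - 1) / R ^ 2) • ((R • P2)ᵀ * M * (R ^ 2 • P3))) + (-((P1 - L1) * G)) + (-(((R - 1) / R ^ 2) • (Gᵀ * (R ^ 2 • P3)))) + (-((R • P2 - L2) * A)) + (-((R • P2 - L2) * G) + R⁻¹ • ((R • P2) * G)) + (-(Aᵀ * (R • P2 - L2))) + (-(R⁻¹ • (Gᵀ * (R • P2))))) (-(R⁻¹ • (Γᵀ * Q * Γ)))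
  have u31 := l1norm_add_le (((R • P2 - L2)ᵀ * M * (R • P2) + L2ᵀ * M * (R • P2 - L2))) ((R ^ 2 • P3 - L3) * M * P1 + L3 * M * (P1 - L1))
  have u32 := l1norm_add_le (((R • P2 - L2)ᵀ * M * (R • P2) + L2ᵀ * M * (R • P2 - L2)) + ((R ^ 2 • P3 - L3) * M * P1 + L3 * M * (P1 - L1))) ((P1 - L1) * M * (R ^ 2 • P3) + L1 * M * (R ^ 2 • P3 - L3))
  have u33 := l1norm_add_le (((R • P2 - L2)ᵀ * M * (R • P2) + L2ᵀ * M * (R • P2 - L2)) + ((R ^ 2 • P3 - L3) * M * P1 + L3 * M * (P1 - L1)) + ((P1 - L1) * M * (R ^ 2 • P3) + L1 * M * (R ^ 2 • P3 - L3))) ((R ^ 2 • P3 - L3) * M * (R • P2) + L3 * M * (R • P2 - L2) - (2 * R⁻¹) • ((R ^ 2 • P3) * M * (R • P2)))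
  have u34 := l1norm_add_le (((R • P2 - L2)ᵀ * M * (R • P2) + L2ᵀ * M * (R • P2 - L2)) + ((R ^ 2 • P3 - L3) * M * P1 + L3 * M * (P1 - L1)) + ((P1 - L1) * M * (R ^ 2 • P3) + L1 * M * (R ^ 2 • P3 - L3)) + ((R ^ 2 • P3 - L3) * M * (R • P2) + L3 * M * (R • P2 - L2) - (2 * R⁻¹) • ((R ^ 2 • P3) * M * (R • P2)))) ((R • P2 - L2)ᵀ * M * (R ^ 2 • P3) + L2ᵀ * M * (R ^ 2 • P3 - L3) - (2 * R⁻¹) • ((R • P2)ᵀ * M * (R ^ 2 • P3)))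
  have u35 := l1norm_add_le (((R • P2 - L2)ᵀ * M * (R • P2) + L2ᵀ * M * (R • P2 - L2)) + ((R ^ 2 • P3 - L3) * M * P1 + L3 * M * (P1 - L1)) + ((P1 - L1) * M * (R ^ 2 • P3) + L1 * M * (R ^ 2 • P3 - L3)) + ((R ^ 2 • P3 - L3) * M * (R • P2) + L3 * M * (R • P2 - L2) - (2 * R⁻¹) • ((R ^ 2 • P3) * M * (R • P2))) + ((R • P2 - L2)ᵀ * M * (R ^ 2 • P3) + L2ᵀ * M * (R ^ 2 • P3 - L3) - (2 * R⁻¹) • ((R • P2)ᵀ * M * (R ^ 2 • P3)))) (-((R • P2 - L2)ᵀ * G) - Gᵀ * (R • P2 - L2))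
  have u36 := l1norm_add_le (((R • P2 - L2)ᵀ * M * (R • P2) + L2ᵀ * M * (R • P2 - L2)) + ((R ^ 2 • P3 - L3) * M * P1 + L3 * M * (P1 - L1)) + ((P1 - L1) * M * (R ^ 2 • P3) + L1 * M * (R ^ 2 • P3 - L3)) + ((R ^ 2 • P3 - L3) * M * (R • P2) + L3 * M * (R • P2 - L2) - (2 * R⁻¹) • ((R ^ 2 • P3) * M * (R • P2))) + ((R • P2 - L2)ᵀ * M * (R ^ 2 • P3) + L2ᵀ * M * (R ^ 2 • P3 - L3) - (2 * R⁻¹) • ((R • P2)ᵀ * M * (R ^ 2 • P3))) + (-((R • P2 - L2)ᵀ * G) - Gᵀ * (R • P2 - L2))) (-((R ^ 2 • P3 - L3) * A) - Aᵀ * (R ^ 2 • P3 - L3))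
  have u37 := l1norm_add_le (((R • P2 - L2)ᵀ * M * (R • P2) + L2ᵀ * M * (R • P2 - L2)) + ((R ^ 2 • P3 - L3) * M * P1 + L3 * M * (P1 - L1)) + ((P1 - L1) * M * (R ^ 2 • P3) + L1 * M * (R ^ 2 • P3 - L3)) + ((R ^ 2 • P3 - L3) * M * (R • P2) + L3 * M * (R • P2 - L2) - (2 * R⁻¹) • ((R ^ 2 • P3) * M * (R • P2))) + ((R • P2 - L2)ᵀ * M * (R ^ 2 • P3) + L2ᵀ * M * (R ^ 2 • P3 - L3) - (2 * R⁻¹) • ((R • P2)ᵀ * M * (R ^ 2 • P3))) + (-((R • P2 - L2)ᵀ * G) - Gᵀ * (R • P2 - L2)) + (-((R ^ 2 • P3 - L3) * A) - Aᵀ * (R ^ 2 • P3 - L3))) (-((R ^ 2 • P3 - L3) * G) + R⁻¹ • ((R ^ 2 • P3) * G))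
  have u38 := l1norm_add_le (((R • P2 - L2)ᵀ * M * (R • P2) + L2ᵀ * M * (R • P2 - L2)) + ((R ^ 2 • P3 - L3) * M * P1 + L3 * M * (P1 - L1)) + ((P1 - L1) * M * (R ^ 2 • P3) + L1 * M * (R ^ 2 • P3 - L3)) + ((R ^ 2 • P3 - L3) * M * (R • P2) + L3 * M * (R • P2 - L2) - (2 * R⁻¹) • ((R ^ 2 • P3) * M * (R • P2))) + ((R • P2 - L2)ᵀ * M * (R ^ 2 • P3) + L2ᵀ * M * (R ^ 2 • P3 - L3) - (2 * R⁻¹) • ((R • P2)ᵀ * M * (R ^ 2 • P3))) + (-((R • P2 - L2)ᵀ * G) - Gᵀ * (R • P2 - L2)) + (-((R ^ 2 • P3 - L3) * A) - Aᵀ * (R ^ 2 • P3 - L3)) + (-((R ^ 2 • P3 - L3) * G) + R⁻¹ • ((R ^ 2 • P3) * G))) (-(Gᵀ * (R ^ 2 • P3 - L3)) + R⁻¹ • (Gᵀ * (R ^ 2 • P3)))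
  have pos1 : 0 ≤ c ^ 2 * l1norm (P1 - L1) := mul_nonneg (by positivity) hE1n
  have pos2 : 0 ≤ c * l1norm (P1 - L1) := mul_nonneg hc0.le hE1n
  have pos3 : 0 ≤ c ^ 2 * l1norm (R ^ 2 • P3 - L3) := mul_nonneg (by positivity) hE3n
  have pos4 : 0 ≤ c * l1norm (R ^ 2 • P3 - L3) := mul_nonneg hc0.le hE3n
  have pos5 : 0 ≤ c ^ 3 * R⁻¹ := by positivity
  rw [hd1, hd2, hd3]
  linarith [hb11, hb12, hb13, hb14, hb15, hb16, hb21, hb22, hb23, hb24, hb25,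
    hb26, hb27, hb28, hb29, hb2a, hb2b, hb31, hb32, hb33, hb34, hb35, hb36,
    hb37, hb38, hb39, u11, u12, u13, u14, u15, u21, u22, u23, u24, u25, u26,
    u27, u28, u29, u210, u31, u32, u33, u34, u35, u36, u37, u38,
    pos1, pos2, pos3, pos4, pos5]


set_option maxHeartbeats 4000000 in
set_option maxRecDepth 100000 in
/-- Theorem 5: if the limiting non-symmetric Riccati ODE for `Λ₂` has a solution on
`[0,T]` (together with `Λ₁` and the then-linear equation for `Λ₃`), then the blocks
of the finite-`N` Riccati solutions satisfy
`sup_t (|Π₁-Λ₁| + |NΠ₂-Λ₂| + |N²Π₃-Λ₃|) = O(1/N)`. -/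
theorem stmt12 {n : ℕ} (T : ℝ) (hT : 0 < T)
    (A G Γ Γf Q Qf M : Matrix (Fin n) (Fin n) ℝ)
    (Λ₁ Λ₂ Λ₃ : ℝ → Matrix (Fin n) (Fin n) ℝ)
    (hΛ₁T : Λ₁ T = Qf)
    (hΛ₁ : ∀ t ∈ Icc (0:ℝ) T, MatrixHasDerivAt Λ₁
      (Λ₁ t * M * Λ₁ t - (Λ₁ t * A + Aᵀ * Λ₁ t) - Q) t)
    (hΛ₂T : Λ₂ T = -(Qf * Γf))
    (hΛ₂ : ∀ t ∈ Icc (0:ℝ) T, MatrixHasDerivAt Λ₂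
      (Λ₁ t * M * Λ₂ t + Λ₂ t * M * Λ₁ t + Λ₂ t * M * Λ₂ t
        - (Λ₁ t * G + Λ₂ t * (A + G) + Aᵀ * Λ₂ t) + Q * Γ) t)
    (hΛ₃T : Λ₃ T = Γfᵀ * Qf * Γf)
    (hΛ₃ : ∀ t ∈ Icc (0:ℝ) T, MatrixHasDerivAt Λ₃
      ((Λ₂ t)ᵀ * M * Λ₂ t + Λ₃ t * M * Λ₁ t + Λ₁ t * M * Λ₃ t
        + Λ₃ t * M * Λ₂ t + (Λ₂ t)ᵀ * M * Λ₃ t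
        - ((Λ₂ t)ᵀ * G + Gᵀ * Λ₂ t + Λ₃ t * (A + G) + (Aᵀ + Gᵀ) * Λ₃ t)
        - Γᵀ * Q * Γ) t)
    (Pi1 Pi2 Pi3 : ℕ → ℝ → Matrix (Fin n) (Fin n) ℝ)
    (hPi1T : ∀ N : ℕ, 2 ≤ N →
      Pi1 N T = (1 - (N:ℝ)⁻¹ • Γfᵀ) * Qf * (1 - (N:ℝ)⁻¹ • Γf))
    (hPi2T : ∀ N : ℕ, 2 ≤ N →
      Pi2 N T = -((1 - (N:ℝ)⁻¹ • Γfᵀ) * Qf * ((N:ℝ)⁻¹ • Γf)))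
    (hPi3T : ∀ N : ℕ, 2 ≤ N →
      Pi3 N T = ((N:ℝ)⁻¹ • Γfᵀ) * Qf * ((N:ℝ)⁻¹ • Γf))
    (hPi1 : ∀ N : ℕ, 2 ≤ N → ∀ t ∈ Icc (0:ℝ) T, MatrixHasDerivAt (Pi1 N)
      (Pi1 N t * M * Pi1 N t
        + ((N:ℝ) - 1) • (Pi2 N t * M * Pi2 N t + (Pi2 N t)ᵀ * M * (Pi2 N t)ᵀ)
        - (Pi1 N t * (A + (N:ℝ)⁻¹ • G) + (Aᵀ + (N:ℝ)⁻¹ • Gᵀ) * Pi1 N t)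
        - (1 - (N:ℝ)⁻¹) • (Pi2 N t * G + Gᵀ * (Pi2 N t)ᵀ)
        - (1 - (N:ℝ)⁻¹ • Γᵀ) * Q * (1 - (N:ℝ)⁻¹ • Γ)) t)
    (hPi2 : ∀ N : ℕ, 2 ≤ N → ∀ t ∈ Icc (0:ℝ) T, MatrixHasDerivAt (Pi2 N)
      (Pi1 N t * M * Pi2 N t + Pi2 N t * M * Pi1 N t + (Pi2 N t)ᵀ * M * Pi3 N t
        + ((N:ℝ) - 2) • (Pi2 N t * M * Pi2 N t + (Pi2 N t)ᵀ * M * Pi3 N t)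
        - (Pi1 N t * ((N:ℝ)⁻¹ • G) + ((N:ℝ)⁻¹ • Gᵀ) * Pi3 N t
            + (((N:ℝ) - 2) / N) • (Gᵀ * Pi3 N t)
            + Pi2 N t * (A + (((N:ℝ) - 1) / N) • G)
            + (Aᵀ + (N:ℝ)⁻¹ • Gᵀ) * Pi2 N t)
        + (1 - (N:ℝ)⁻¹ • Γᵀ) * Q * ((N:ℝ)⁻¹ • Γ)) t)
    (hPi3 : ∀ N : ℕ, 2 ≤ N → ∀ t ∈ Icc (0:ℝ) T, MatrixHasDerivAt (Pi3 N)
      ((Pi2 N t)ᵀ * M * Pi2 N t + Pi3 N t * M * Pi1 N t + Pi1 N t * M * Pi3 N t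
        + ((N:ℝ) - 2) • (Pi3 N t * M * Pi2 N t + (Pi2 N t)ᵀ * M * Pi3 N t)
        - ((N:ℝ)⁻¹ • ((Pi2 N t)ᵀ * G + Gᵀ * Pi2 N t)
            + Pi3 N t * (A + (N:ℝ)⁻¹ • G) + (Aᵀ + (N:ℝ)⁻¹ • Gᵀ) * Pi3 N t
            + (((N:ℝ) - 2) / N) • (Pi3 N t * G + Gᵀ * Pi3 N t))
        - ((N:ℝ)⁻¹ • Γᵀ) * Q * ((N:ℝ)⁻¹ • Γ)) t) :
    ∃ C : ℝ, ∃ N₀ : ℕ, ∀ N : ℕ, N₀ ≤ N → ∀ t ∈ Icc (0:ℝ) T,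
      l1norm (Pi1 N t - Λ₁ t) + l1norm ((N:ℝ) • Pi2 N t - Λ₂ t)
        + l1norm (((N:ℝ)^2) • Pi3 N t - Λ₃ t) ≤ C / N := by
  classical
  -- continuity and boundedness of the limiting solution
  have hΛderiv : ∀ t ∈ Icc (0:ℝ) T,
      HasDerivAt (fun s => pack (Λ₁ s) (Λ₂ s) (Λ₃ s))
        (pack
          (Λ₁ t * M * Λ₁ t - (Λ₁ t * A + Aᵀ * Λ₁ t) - Q)
          (Λ₁ t * M * Λ₂ t + Λ₂ t * M * Λ₁ t + Λ₂ t * M * Λ₂ t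
            - (Λ₁ t * G + Λ₂ t * (A + G) + Aᵀ * Λ₂ t) + Q * Γ)
          ((Λ₂ t)ᵀ * M * Λ₂ t + Λ₃ t * M * Λ₁ t + Λ₁ t * M * Λ₃ t
            + Λ₃ t * M * Λ₂ t + (Λ₂ t)ᵀ * M * Λ₃ t
            - ((Λ₂ t)ᵀ * G + Gᵀ * Λ₂ t + Λ₃ t * (A + G) + (Aᵀ + Gᵀ) * Λ₃ t)
            - Γᵀ * Q * Γ)) t :=
    fun t ht => pack_hasDerivAt (hΛ₁ t ht) (hΛ₂ t ht) (hΛ₃ t ht)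
  have hΛcont : ContinuousOn (fun s => pack (Λ₁ s) (Λ₂ s) (Λ₃ s)) (Icc 0 T) :=
    fun t ht => (hΛderiv t ht).continuousAt.continuousWithinAt
  obtain ⟨c₀, hc₀⟩ := isCompact_Icc.exists_bound_of_continuousOn hΛcont
  obtain ⟨c, hc_def⟩ : ∃ c : ℝ, c = 1 + |c₀| + l1norm A + l1norm G + l1norm Γ
      + l1norm Γf + l1norm Q + l1norm Qf + l1norm M := ⟨_, rfl⟩
  have hnnA := l1norm_nonneg A; have hnnG := l1norm_nonneg G
  have hnnΓ := l1norm_nonneg Γ; have hnnΓf := l1norm_nonneg Γf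
  have hnnQ := l1norm_nonneg Q; have hnnQf := l1norm_nonneg Qf
  have hnnM := l1norm_nonneg M; have hnnc₀ := abs_nonneg c₀
  have hc1 : 1 ≤ c := by rw [hc_def]; linarith
  have hc0 : 0 < c := by linarith
  have hAb : l1norm A ≤ c := by rw [hc_def]; linarith
  have hGb : l1norm G ≤ c := by rw [hc_def]; linarith
  have hΓb : l1norm Γ ≤ c := by rw [hc_def]; linarith
  have hΓfb : l1norm Γf ≤ c := by rw [hc_def]; linarith
  have hQb : l1norm Q ≤ c := by rw [hc_def]; linarith
  have hQfb : l1norm Qf ≤ c := by rw [hc_def]; linarith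
  have hMb : l1norm M ≤ c := by rw [hc_def]; linarith
  have hAtb : l1norm Aᵀ ≤ c := by rw [l1norm_transpose]; exact hAb
  have hGtb : l1norm Gᵀ ≤ c := by rw [l1norm_transpose]; exact hGb
  have hΓtb : l1norm Γᵀ ≤ c := by rw [l1norm_transpose]; exact hΓb
  have hΓftb : l1norm Γfᵀ ≤ c := by rw [l1norm_transpose]; exact hΓfb
  have hΛ1b : ∀ t ∈ Icc (0:ℝ) T, l1norm (Λ₁ t) ≤ c := by
    intro t ht
    have h := hc₀ t ht
    rw [pack_norm] at h
    have h2 := le_abs_self c₀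
    have := l1norm_nonneg (Λ₂ t); have := l1norm_nonneg (Λ₃ t)
    rw [hc_def]; linarith
  have hΛ2b : ∀ t ∈ Icc (0:ℝ) T, l1norm (Λ₂ t) ≤ c := by
    intro t ht
    have h := hc₀ t ht
    rw [pack_norm] at h
    have h2 := le_abs_self c₀
    have := l1norm_nonneg (Λ₁ t); have := l1norm_nonneg (Λ₃ t)
    rw [hc_def]; linarith
  have hΛ3b : ∀ t ∈ Icc (0:ℝ) T, l1norm (Λ₃ t) ≤ c := by
    intro t ht
    have h := hc₀ t ht
    rw [pack_norm] at h
    have h2 := le_abs_self c₀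
    have := l1norm_nonneg (Λ₁ t); have := l1norm_nonneg (Λ₂ t)
    rw [hc_def]; linarith
  -- the constants
  obtain ⟨K, hK_def⟩ : ∃ K : ℝ, K = 12 * c ^ 2 + 5 * c := ⟨_, rfl⟩
  obtain ⟨B, hB_def⟩ : ∃ B : ℝ, B = 40 * c ^ 3 + 20 * c ^ 2 := ⟨_, rfl⟩
  obtain ⟨δc, hδc_def⟩ : ∃ δc : ℝ, δc = 4 * c ^ 3 := ⟨_, rfl⟩
  obtain ⟨C, hC_def⟩ : ∃ C : ℝ, C = (δc + B) * Real.exp (K * T) := ⟨_, rfl⟩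
  have hK1 : 1 ≤ K := by rw [hK_def]; nlinarith
  have hK0 : 0 < K := by linarith
  have hB0 : 0 ≤ B := by rw [hB_def]; nlinarith
  have hδ0 : 0 ≤ δc := by rw [hδc_def]; nlinarith
  have hexp1 : 1 ≤ Real.exp (K * T) := Real.one_le_exp (mul_nonneg hK0.le hT.le)
  have hδC : δc ≤ C := by
    rw [hC_def]
    have h := mul_le_mul_of_nonneg_left hexp1 (by linarith : (0:ℝ) ≤ δc + B)
    rw [mul_one] at h
    linarith
  have hC0 : 0 ≤ C := le_trans hδ0 hδC
  refine ⟨C, 2 + Nat.ceil (2 * C), ?_⟩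
  intro N hN
  have hN2 : 2 ≤ N := le_trans (Nat.le_add_right 2 _) hN
  have hNR : (2:ℝ) ≤ (N:ℝ) := by exact_mod_cast hN2
  have hN0 : (0:ℝ) < N := by linarith
  have hNne : (N:ℝ) ≠ 0 := ne_of_gt hN0
  have hν0 : (0:ℝ) < (N:ℝ)⁻¹ := inv_pos.mpr hN0
  have hν1 : (N:ℝ)⁻¹ ≤ 1 := by
    rw [inv_le_one_iff₀]; right; linarith
  have hνN : (N:ℝ) * (N:ℝ)⁻¹ = 1 := mul_inv_cancel₀ hNne
  have hνν : (N:ℝ)⁻¹ * (N:ℝ)⁻¹ ≤ (N:ℝ)⁻¹ := by nlinarith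
  have hCN : C / N ≤ 1 / 2 := by
    have h1 : (2 * C : ℝ) ≤ (Nat.ceil (2 * C) : ℝ) := Nat.le_ceil _
    have h2 : ((2 + Nat.ceil (2 * C) : ℕ) : ℝ) ≤ N := by exact_mod_cast hN
    push_cast at h2
    rw [div_le_iff₀ hN0]
    linarith
  -- the error function and its derivative
  obtain ⟨dd1, hdd1_def⟩ : ∃ dd1 : ℝ → Matrix (Fin n) (Fin n) ℝ, dd1 = fun s =>
    (Pi1 N s * M * Pi1 N s
        + ((N:ℝ) - 1) • (Pi2 N s * M * Pi2 N s + (Pi2 N s)ᵀ * M * (Pi2 N s)ᵀ)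
        - (Pi1 N s * (A + (N:ℝ)⁻¹ • G) + (Aᵀ + (N:ℝ)⁻¹ • Gᵀ) * Pi1 N s)
        - (1 - (N:ℝ)⁻¹) • (Pi2 N s * G + Gᵀ * (Pi2 N s)ᵀ)
        - (1 - (N:ℝ)⁻¹ • Γᵀ) * Q * (1 - (N:ℝ)⁻¹ • Γ))
      - (Λ₁ s * M * Λ₁ s - (Λ₁ s * A + Aᵀ * Λ₁ s) - Q) := ⟨_, rfl⟩
  obtain ⟨dd2, hdd2_def⟩ : ∃ dd2 : ℝ → Matrix (Fin n) (Fin n) ℝ, dd2 = fun s =>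
    (N:ℝ) • (Pi1 N s * M * Pi2 N s + Pi2 N s * M * Pi1 N s + (Pi2 N s)ᵀ * M * Pi3 N s
        + ((N:ℝ) - 2) • (Pi2 N s * M * Pi2 N s + (Pi2 N s)ᵀ * M * Pi3 N s)
        - (Pi1 N s * ((N:ℝ)⁻¹ • G) + ((N:ℝ)⁻¹ • Gᵀ) * Pi3 N s
            + (((N:ℝ) - 2) / N) • (Gᵀ * Pi3 N s)
            + Pi2 N s * (A + (((N:ℝ) - 1) / N) • G)
            + (Aᵀ + (N:ℝ)⁻¹ • Gᵀ) * Pi2 N s)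
        + (1 - (N:ℝ)⁻¹ • Γᵀ) * Q * ((N:ℝ)⁻¹ • Γ))
      - (Λ₁ s * M * Λ₂ s + Λ₂ s * M * Λ₁ s + Λ₂ s * M * Λ₂ s
        - (Λ₁ s * G + Λ₂ s * (A + G) + Aᵀ * Λ₂ s) + Q * Γ) := ⟨_, rfl⟩
  obtain ⟨dd3, hdd3_def⟩ : ∃ dd3 : ℝ → Matrix (Fin n) (Fin n) ℝ, dd3 = fun s =>
    ((N:ℝ)^2) • ((Pi2 N s)ᵀ * M * Pi2 N s + Pi3 N s * M * Pi1 N s + Pi1 N s * M * Pi3 N s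
        + ((N:ℝ) - 2) • (Pi3 N s * M * Pi2 N s + (Pi2 N s)ᵀ * M * Pi3 N s)
        - ((N:ℝ)⁻¹ • ((Pi2 N s)ᵀ * G + Gᵀ * Pi2 N s)
            + Pi3 N s * (A + (N:ℝ)⁻¹ • G) + (Aᵀ + (N:ℝ)⁻¹ • Gᵀ) * Pi3 N s
            + (((N:ℝ) - 2) / N) • (Pi3 N s * G + Gᵀ * Pi3 N s))
        - ((N:ℝ)⁻¹ • Γᵀ) * Q * ((N:ℝ)⁻¹ • Γ))
      - ((Λ₂ s)ᵀ * M * Λ₂ s + Λ₃ s * M * Λ₁ s + Λ₁ s * M * Λ₃ s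
        + Λ₃ s * M * Λ₂ s + (Λ₂ s)ᵀ * M * Λ₃ s
        - ((Λ₂ s)ᵀ * G + Gᵀ * Λ₂ s + Λ₃ s * (A + G) + (Aᵀ + Gᵀ) * Λ₃ s)
        - Γᵀ * Q * Γ) := ⟨_, rfl⟩
  obtain ⟨F, hF_def⟩ : ∃ F : ℝ → Esp n, F = fun s =>
    pack (Pi1 N s - Λ₁ s) ((N:ℝ) • Pi2 N s - Λ₂ s) (((N:ℝ)^2) • Pi3 N s - Λ₃ s) := ⟨_, rfl⟩
  obtain ⟨FD, hFD_def⟩ : ∃ FD : ℝ → Esp n, FD = fun s => pack (dd1 s) (dd2 s) (dd3 s) :=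
    ⟨_, rfl⟩
  have hFd : ∀ s ∈ Icc (0:ℝ) T, HasDerivAt F (FD s) s := by
    intro s hs
    simp only [hF_def, hFD_def, hdd1_def, hdd2_def, hdd3_def]
    exact pack_hasDerivAt (MHD_sub (hPi1 N hN2 s hs) (hΛ₁ s hs))
      (MHD_smul_sub _ (hPi2 N hN2 s hs) (hΛ₂ s hs))
      (MHD_smul_sub _ (hPi3 N hN2 s hs) (hΛ₃ s hs))
  have hFcont : ContinuousOn F (Icc 0 T) :=
    fun s hs => (hFd s hs).continuousAt.continuousWithinAt
  have hsubc : Continuous (fun r : ℝ => T - r) := continuous_const.sub continuous_id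
  have hmapsto : MapsTo (fun r : ℝ => T - r) (Icc (0:ℝ) T) (Icc (0:ℝ) T) := by
    intro u hu
    simp only [mem_Icc] at hu ⊢
    constructor <;> linarith
  have hucont : ContinuousOn (fun r => ‖F (T - r)‖) (Icc 0 T) := by
    refine ContinuousOn.norm ?_
    intro r hr
    exact ContinuousWithinAt.comp (hFcont (T - r) (hmapsto hr))
      (hsubc.continuousWithinAt) hmapsto
  -- terminal estimate
  have hterm : ‖F T‖ ≤ δc * (N:ℝ)⁻¹ := by
    simp only [hF_def]
    rw [pack_norm, hPi1T N hN2, hPi2T N hN2, hPi3T N hN2, hΛ₁T, hΛ₂T, hΛ₃T, hδc_def]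
    exact term_bound (N:ℝ) c hNR hc1 Γf Qf hΓfb hQfb
  -- master derivative bound
  have hmaster : ∀ s ∈ Icc (0:ℝ) T, ‖F s‖ ≤ 1 →
      ‖FD s‖ ≤ K * ‖F s‖ + B * (N:ℝ)⁻¹ := by
    intro s hs hsmall
    simp only [hF_def] at hsmall
    rw [pack_norm] at hsmall
    simp only [hF_def, hFD_def, hdd1_def, hdd2_def, hdd3_def]
    rw [pack_norm, pack_norm, hK_def, hB_def]
    exact key_bound (N:ℝ) c hNR hc1 A G Γ Q M (Pi1 N s) (Pi2 N s) (Pi3 N s)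
      (Λ₁ s) (Λ₂ s) (Λ₃ s) hAb hGb hΓb hQb hMb (hΛ1b s hs) (hΛ2b s hs) (hΛ3b s hs) hsmall
  -- the Gronwall bound is at most C/N
  have hgb : ∀ x ∈ Icc (0:ℝ) T,
      gronwallBound (δc * (N:ℝ)⁻¹) K (B * (N:ℝ)⁻¹) x ≤ C * (N:ℝ)⁻¹ := by
    intro x hx
    rw [gronwallBound_of_K_ne_0 (ne_of_gt hK0)]
    have h1 : Real.exp (K * x) ≤ Real.exp (K * T) :=
      Real.exp_le_exp.mpr (mul_le_mul_of_nonneg_left hx.2 hK0.le)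
    have h2 : (1:ℝ) ≤ Real.exp (K * x) := Real.one_le_exp (mul_nonneg hK0.le hx.1)
    have h3 : B * (N:ℝ)⁻¹ / K ≤ B * (N:ℝ)⁻¹ := div_le_self (by positivity) hK1
    have hint1 : δc * (N:ℝ)⁻¹ * Real.exp (K * x) ≤ δc * (N:ℝ)⁻¹ * Real.exp (K * T) :=
      mul_le_mul_of_nonneg_left h1 (by positivity)
    have hint2 : B * (N:ℝ)⁻¹ / K * (Real.exp (K * x) - 1) ≤
        B * (N:ℝ)⁻¹ * Real.exp (K * T) := by
      refine mul_le_mul h3 (by linarith) (by linarith) (by positivity)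
    rw [hC_def]
    nlinarith [hint1, hint2]
  -- Gronwall estimate on a subinterval
  have hgron : ∀ z, 0 < z → z ≤ T →
      (∀ r ∈ Ico (0:ℝ) z, ‖F (T - r)‖ ≤ 1) →
      ∀ r ∈ Icc (0:ℝ) z, ‖F (T - r)‖ ≤ C * (N:ℝ)⁻¹ := by
    intro z hz0 hzT hone
    have hmem : ∀ r, 0 ≤ r → r < z → T - r ∈ Icc (0:ℝ) T := fun r h1 h2 =>
      ⟨by linarith, by linarith⟩
    have key := norm_le_gronwallBound_of_norm_deriv_right_le
      (f := fun r => F (T - r)) (f' := fun r => -FD (T - r))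
      (δ := δc * (N:ℝ)⁻¹) (K := K) (ε := B * (N:ℝ)⁻¹) (a := 0) (b := z)
      (fun r hr => ContinuousWithinAt.comp
        (hFcont (T - r) ⟨by linarith [hr.1, hr.2, hzT], by linarith [hr.1]⟩)
        (hsubc.continuousWithinAt)
        (fun u hu => ⟨by linarith [hu.2, hzT], by linarith [hu.1]⟩))
      (fun r hr => by
        have h1 : HasDerivAt (fun u : ℝ => T - u) (-1) r := by
          simpa using (hasDerivAt_id r).const_sub T
        have h2 := HasDerivAt.scomp (h := fun u : ℝ => T - u) (x := r)
          (hFd (T - r) (hmem r hr.1 hr.2)) h1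
        simp only [Function.comp_def, neg_smul, one_smul] at h2
        exact h2.hasDerivWithinAt)
      (by simpa using hterm)
      (fun r hr => by
        rw [norm_neg]
        exact hmaster (T - r) (hmem r hr.1 hr.2) (hone r hr))
    intro r hr
    have h2 := key r hr
    rw [sub_zero] at h2
    exact h2.trans (hgb r ⟨hr.1, hr.2.trans hzT⟩)
  -- bootstrap via continuous induction
  have hboot : Icc (0:ℝ) T ⊆
      {s : ℝ | ∀ r, 0 ≤ r → r ≤ s → r ≤ T → ‖F (T - r)‖ ≤ C * (N:ℝ)⁻¹} := by
    set S : Set ℝ := {s : ℝ | ∀ r, 0 ≤ r → r ≤ s → r ≤ T → ‖F (T - r)‖ ≤ C * (N:ℝ)⁻¹}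
      with hS_def
    apply IsClosed.Icc_subset_of_forall_exists_gt
    · -- closedness of S ∩ Icc 0 T
      apply IsSeqClosed.isClosed
      intro x p hx hp
      refine ⟨?_, isClosed_Icc.mem_of_tendsto hp (Filter.Eventually.of_forall fun k => (hx k).2)⟩
      intro r hr0 hrp hrT
      rcases lt_or_eq_of_le hrp with hlt | heq
      · obtain ⟨k, hk⟩ := (hp.eventually (eventually_gt_nhds hlt)).exists
        exact (hx k).1 r hr0 hk.le hrT
      · subst heq
        have hxk : ∀ k, ‖F (T - x k)‖ ≤ C * (N:ℝ)⁻¹ := fun k =>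
          (hx k).1 (x k) (hx k).2.1 le_rfl (hx k).2.2
        have htends : Filter.Tendsto (fun k => ‖F (T - x k)‖) Filter.atTop
            (nhds ‖F (T - r)‖) :=
          (hucont r ⟨hr0, hrT⟩).tendsto.comp
            (tendsto_nhdsWithin_of_tendsto_nhds_of_eventually_within x hp
              (Filter.Eventually.of_forall fun k => (hx k).2))
        exact le_of_tendsto htends (Filter.Eventually.of_forall hxk)
    · -- 0 ∈ S
      intro r hr0 hrle hrT
      have hr : r = 0 := le_antisymm hrle hr0
      subst hr
      have : ‖F (T - 0)‖ ≤ δc * (N:ℝ)⁻¹ := by simpa using hterm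
      refine this.trans ?_
      exact mul_le_mul_of_nonneg_right hδC hν0.le
    · -- the induction step
      rintro x ⟨hxS, hx0, hxT⟩ y hy
      have hCν : C * (N:ℝ)⁻¹ ≤ 1 / 2 := by
        rw [← div_eq_mul_inv]; exact hCN
      have hux : ‖F (T - x)‖ ≤ C * (N:ℝ)⁻¹ := hxS x hx0 le_rfl hxT.le
      have h1 : ∀ᶠ r in nhdsWithin x (Icc (0:ℝ) T), ‖F (T - r)‖ < 1 :=
        Filter.Tendsto.eventually_lt_const (by linarith) (hucont x ⟨hx0, hxT.le⟩).tendsto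
      obtain ⟨η, hη0, hη⟩ := Metric.mem_nhdsWithin_iff.mp h1
      set z : ℝ := min (x + η / 2) (min y T) with hz_def
      have hzx : x < z := by
        apply lt_min (by linarith)
        exact lt_min hy hxT
      have hz0 : 0 < z := lt_of_le_of_lt hx0 hzx
      have hzT : z ≤ T := le_trans (min_le_right _ _) (min_le_right _ _)
      have hzη : z ≤ x + η / 2 := min_le_left _ _
      have hone : ∀ r ∈ Ico (0:ℝ) z, ‖F (T - r)‖ ≤ 1 := by
        intro r hr
        by_cases hrx : r ≤ x
        · exact (hxS r hr.1 hrx (by linarith [hxT])).trans (by linarith)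
        · push_neg at hrx
          have hball : r ∈ Metric.ball x η := by
            rw [Metric.mem_ball, Real.dist_eq, abs_of_pos (by linarith)]
            have := hr.2
            linarith
          exact (hη ⟨hball, ⟨hr.1, by linarith [hr.2]⟩⟩).le
      refine ⟨z, ?_, hzx, le_trans (min_le_right _ _) (min_le_left _ _)⟩
      intro r hr0 hrz hrT
      exact hgron z hz0 hzT hone r ⟨hr0, hrz⟩
  -- conclusion
  intro t ht
  have hmem : (T - t) ∈ Icc (0:ℝ) T := ⟨by linarith [ht.2], by linarith [ht.1]⟩
  have hfin := hboot hmem (T - t) hmem.1 le_rfl hmem.2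
  rw [sub_sub_cancel] at hfin
  simp only [hF_def] at hfin
  rw [pack_norm] at hfin
  rw [div_eq_mul_inv]
  exact hfin
end

section
/- For $A = 0.2$, $B = G = Q = R = 1$, $\Gamma = 1.2$, $\Gamma_f = 0$, $Q_f = 0$, $T = 3$ (scalar case), the scalar Riccati ODE $\dot{\Lambda}_1 = \Lambda_1^2 - 0.4\Lambda_1 - 1$, $\Lambda_1(3) = 0$, has a unique (explicitly computable) solution on $[0,3]$, but the scalar non-symmetric Riccati ODE $\dot{\Lambda}_2 = 2\Lambda_1\Lambda_2 + \Lambda_2^2 - \Lambda_1 - 1.4\Lambda_2 + 1.2$, $\Lambda_2(3) = 0$, does not have a solution on all of $[0,3]$ (its maximal existence interval, going backward from $T=3$, is strictly smaller than $[0,3]$). -/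
open Set

/-- Uniqueness (backward from time 3) for the scalar Riccati ODE
`ẋ = x² + βx + γ` on `Icc a 3`. -/
lemma riccati_unique (β γ a : ℝ) (ha : a ≤ 3) (f g : ℝ → ℝ)
    (hf : ∀ t ∈ Icc a 3, HasDerivAt f ((f t)^2 + β * f t + γ) t)
    (hg : ∀ t ∈ Icc a 3, HasDerivAt g ((g t)^2 + β * g t + γ) t)
    (h3 : f 3 = g 3) : ∀ t ∈ Icc a 3, f t = g t := by
  have hfc : ContinuousOn f (Icc a 3) :=
    fun t ht => ((hf t ht).continuousAt.continuousWithinAt)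
  have hgc : ContinuousOn g (Icc a 3) :=
    fun t ht => ((hg t ht).continuousAt.continuousWithinAt)
  obtain ⟨C, hC⟩ := isCompact_Icc.exists_bound_of_continuousOn hfc
  obtain ⟨C', hC'⟩ := isCompact_Icc.exists_bound_of_continuousOn hgc
  set R : ℝ := |C| + |C'| with hR
  have hRf : ∀ t ∈ Icc a 3, f t ∈ Metric.closedBall (0:ℝ) R := by
    intro t ht
    have h := hC t ht
    rw [Real.norm_eq_abs] at h
    simp only [Metric.mem_closedBall, Real.dist_eq, sub_zero]
    linarith [le_abs_self C, abs_nonneg C']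
  have hRg : ∀ t ∈ Icc a 3, g t ∈ Metric.closedBall (0:ℝ) R := by
    intro t ht
    have h := hC' t ht
    rw [Real.norm_eq_abs] at h
    simp only [Metric.mem_closedBall, Real.dist_eq, sub_zero]
    linarith [le_abs_self C', abs_nonneg C]
  have hRnn : (0:ℝ) ≤ R := by positivity
  set K : NNReal := ⟨2*R + |β|, by positivity⟩ with hK
  have hv : ∀ _t : ℝ, LipschitzOnWith K (fun x : ℝ => x^2 + β * x + γ)
      (Metric.closedBall (0:ℝ) R) := by
    intro _
    apply LipschitzOnWith.of_dist_le_mul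
    intro x hx y hy
    simp only [Metric.mem_closedBall, Real.dist_eq, sub_zero] at hx hy ⊢
    have hxy : x^2 + β*x + γ - (y^2 + β*y + γ) = (x - y) * (x + y + β) := by ring
    rw [hxy, abs_mul]
    have h1 : |x + y + β| ≤ 2*R + |β| := by
      calc |x + y + β| ≤ |x| + |y| + |β| := by
            calc |x + y + β| ≤ |x + y| + |β| := abs_add_le _ _
            _ ≤ |x| + |y| + |β| := by linarith [abs_add_le x y]
      _ ≤ 2*R + |β| := by linarith
    have hKc : (K : ℝ) = 2*R + |β| := rfl
    rw [hKc, mul_comm]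
    exact mul_le_mul_of_nonneg_right h1 (abs_nonneg _)
  have := ODE_solution_unique_of_mem_Icc_left (fun t _ => hv t) hfc
    (fun t ht => (hf t (Ioc_subset_Icc_self ht)).hasDerivWithinAt)
    (fun t ht => hRf t (Ioc_subset_Icc_self ht)) hgc
    (fun t ht => (hg t (Ioc_subset_Icc_self ht)).hasDerivWithinAt)
    (fun t ht => hRg t (Ioc_subset_Icc_self ht)) h3
  exact fun t ht => this ht

/-- Derivative of the explicit solution of `ẏ = y² - 0.4 y - 1`. -/
lemma lam1_deriv (c : ℝ) (hc2 : c^2 = 1.04) (hc1 : 1 < c) (t : ℝ) :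
    HasDerivAt (fun t => (Real.exp (2*c*(t-3)) - 1) /
        (0.2 - c - (0.2 + c) * Real.exp (2*c*(t-3))))
      (((Real.exp (2*c*(t-3)) - 1) /
        (0.2 - c - (0.2 + c) * Real.exp (2*c*(t-3))))^2
        - 0.4 * ((Real.exp (2*c*(t-3)) - 1) /
        (0.2 - c - (0.2 + c) * Real.exp (2*c*(t-3)))) - 1) t := by
  set E := Real.exp (2*c*(t-3)) with hE
  have hEpos : 0 < E := Real.exp_pos _
  have hD : 0.2 - c - (0.2 + c) * E < 0 := by nlinarith
  have hDne : 0.2 - c - (0.2 + c) * E ≠ 0 := ne_of_lt hD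
  have h1 : HasDerivAt (fun t : ℝ => 2*c*(t-3)) (2*c) t := by
    simpa using ((hasDerivAt_id t).sub_const 3).const_mul (2*c)
  have hEd : HasDerivAt (fun t => Real.exp (2*c*(t-3))) (E * (2*c)) t := h1.exp
  have hnum : HasDerivAt (fun t => Real.exp (2*c*(t-3)) - 1) (E * (2*c)) t :=
    hEd.sub_const 1
  have hden : HasDerivAt (fun t => 0.2 - c - (0.2 + c) * Real.exp (2*c*(t-3)))
      (-((0.2 + c) * (E * (2*c)))) t := by
    simpa using (hEd.const_mul (0.2 + c)).const_sub (0.2 - c)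
  have h : HasDerivAt (fun t => (Real.exp (2*c*(t-3)) - 1) /
      (0.2 - c - (0.2 + c) * Real.exp (2*c*(t-3)))) _ t := hnum.div hden hDne
  rw [← hE] at h
  convert h using 1
  rw [eq_div_iff (pow_ne_zero 2 hDne)]
  have hq : (E - 1) / (0.2 - c - (0.2 + c) * E) * (0.2 - c - (0.2 + c) * E) = E - 1 := div_mul_cancel₀ _ hDne
  linear_combination ((E - 1) / (0.2 - c - (0.2 + c) * E) * (0.2 - c - (0.2 + c) * E) + (E - 1) - 0.4 * (0.2 - c - (0.2 + c) * E)) * hq - (E - 1)^2 * hc2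

/-- Derivative of the explicit solution of `ẇ = w² - 1.4 w + 0.2`. -/
lemma w_deriv (d : ℝ) (hd2 : d^2 = 1.16) (t : ℝ)
    (hDne : (1.4 - d) - (1.4 + d) * Real.exp (d*(t-3)) ≠ 0) :
    HasDerivAt (fun t => 0.4*(1 - Real.exp (d*(t-3))) /
        ((1.4 - d) - (1.4 + d) * Real.exp (d*(t-3))))
      ((0.4*(1 - Real.exp (d*(t-3))) /
        ((1.4 - d) - (1.4 + d) * Real.exp (d*(t-3))))^2
        + (-1.4) * (0.4*(1 - Real.exp (d*(t-3))) /
        ((1.4 - d) - (1.4 + d) * Real.exp (d*(t-3)))) + 0.2) t := by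
  set E := Real.exp (d*(t-3)) with hE
  have h1 : HasDerivAt (fun t : ℝ => d*(t-3)) d t := by
    simpa using ((hasDerivAt_id t).sub_const 3).const_mul d
  have hEd : HasDerivAt (fun t => Real.exp (d*(t-3))) (E * d) t := h1.exp
  have hnum : HasDerivAt (fun t => 0.4*(1 - Real.exp (d*(t-3))))
      (0.4 * (-(E * d))) t := by
    simpa using ((hEd.const_sub 1).const_mul 0.4)
  have hden : HasDerivAt (fun t => (1.4 - d) - (1.4 + d) * Real.exp (d*(t-3)))
      (-((1.4 + d) * (E * d))) t := by
    simpa using (hEd.const_mul (1.4 + d)).const_sub (1.4 - d)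
  have h : HasDerivAt (fun t => 0.4*(1 - Real.exp (d*(t-3))) /
      ((1.4 - d) - (1.4 + d) * Real.exp (d*(t-3)))) _ t := hnum.div hden hDne
  rw [← hE] at h
  convert h using 1
  rw [eq_div_iff (pow_ne_zero 2 hDne)]
  have hq : 0.4*(1 - E) / ((1.4 - d) - (1.4 + d) * E) * ((1.4 - d) - (1.4 + d) * E) = 0.4*(1 - E) := div_mul_cancel₀ _ hDne
  linear_combination (0.4*(1 - E) / ((1.4 - d) - (1.4 + d) * E) * ((1.4 - d) - (1.4 + d) * E) + 0.4*(1 - E) - 1.4 * ((1.4 - d) - (1.4 + d) * E)) * hq + 0.2 * (1 - E)^2 * hd2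

set_option maxHeartbeats 1000000 in
/-- The scalar example: with `A = 0.2`, `B = G = Q = R = 1`, `Γ = 1.2`,
`Γ_f = Q_f = 0`, `T = 3`, the standard scalar Riccati ODE
`Λ̇₁ = Λ₁² - 0.4Λ₁ - 1`, `Λ₁(3) = 0`, has a unique solution on `[0,3]`, but the
non-symmetric scalar Riccati ODE `Λ̇₂ = 2Λ₁Λ₂ + Λ₂² - Λ₁ - 1.4Λ₂ + 1.2`,
`Λ₂(3) = 0`, has no solution on all of `[0,3]` — hence no asymptotic solvability. -/
theorem stmt14 :
    ∃ Λ₁ : ℝ → ℝ,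
      (Λ₁ 3 = 0 ∧ ∀ t ∈ Icc (0:ℝ) 3,
        HasDerivAt Λ₁ ((Λ₁ t)^2 - 0.4 * Λ₁ t - 1) t) ∧
      -- uniqueness of Λ₁ on [0,3]
      (∀ Λ' : ℝ → ℝ, Λ' 3 = 0 →
        (∀ t ∈ Icc (0:ℝ) 3, HasDerivAt Λ' ((Λ' t)^2 - 0.4 * Λ' t - 1) t) →
        ∀ t ∈ Icc (0:ℝ) 3, Λ' t = Λ₁ t) ∧
      -- no global solution of the Λ₂-equation on [0,3]
      ¬ ∃ Λ₂ : ℝ → ℝ, Λ₂ 3 = 0 ∧ ∀ t ∈ Icc (0:ℝ) 3,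
        HasDerivAt Λ₂
          (2 * Λ₁ t * Λ₂ t + (Λ₂ t)^2 - Λ₁ t - 1.4 * Λ₂ t + 1.2) t := by
  have hc2 : (Real.sqrt 1.04)^2 = 1.04 := Real.sq_sqrt (by norm_num)
  set c : ℝ := Real.sqrt 1.04 with hcdef
  have hc0 : 0 ≤ c := Real.sqrt_nonneg _
  have hc1 : 1 < c := by nlinarith
  refine ⟨fun t => (Real.exp (2*c*(t-3)) - 1) /
      (0.2 - c - (0.2 + c) * Real.exp (2*c*(t-3))), ⟨?_, ?_⟩, ?_, ?_⟩
  · show (Real.exp (2*c*(3-3)) - 1) / _ = 0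
    norm_num
  · exact fun t _ => lam1_deriv c hc2 hc1 t
  · -- uniqueness
    intro Λ' h3' hd' t ht
    have h3eq : Λ' 3 = (fun t => (Real.exp (2*c*(t-3)) - 1) /
        (0.2 - c - (0.2 + c) * Real.exp (2*c*(t-3)))) 3 := by
      rw [h3']
      show (0:ℝ) = (Real.exp (2*c*(3-3)) - 1) / _
      norm_num
    refine riccati_unique (-0.4) (-1) 0 (by norm_num) Λ'
      (fun t => (Real.exp (2*c*(t-3)) - 1) /
        (0.2 - c - (0.2 + c) * Real.exp (2*c*(t-3))))
      (fun s hs => ?_) (fun s hs => ?_) h3eq t ht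
    · have h := hd' s hs
      convert h using 1
      ring
    · have h := lam1_deriv c hc2 hc1 s
      convert h using 1
      ring
  · -- nonexistence of Λ₂
    rintro ⟨Λ₂, h23, h2d⟩
    have hd2 : (Real.sqrt 1.16)^2 = 1.16 := Real.sq_sqrt (by norm_num)
    set d : ℝ := Real.sqrt 1.16 with hddef
    have hd0 : 0 ≤ d := Real.sqrt_nonneg _
    have hd1 : 1 < d := by nlinarith
    have hdle : d ≤ 1.08 := by nlinarith
    clear_value c d
    set Λ₁ : ℝ → ℝ := fun t => (Real.exp (2*c*(t-3)) - 1) /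
      (0.2 - c - (0.2 + c) * Real.exp (2*c*(t-3))) with hΛ₁def
    have hΛ3 : Λ₁ 3 = 0 := by
      show (Real.exp (2*c*(3-3)) - 1) / _ = 0
      norm_num
    set w : ℝ → ℝ := fun t => Λ₁ t + Λ₂ t with hwdef
    have hw3 : w 3 = 0 := by
      show Λ₁ 3 + Λ₂ 3 = 0
      rw [hΛ3, h23]; ring
    have hwd : ∀ t ∈ Icc (0:ℝ) 3,
        HasDerivAt w ((w t)^2 + (-1.4) * w t + 0.2) t := by
      intro t ht
      have h : HasDerivAt (fun t => Λ₁ t + Λ₂ t) _ t := (lam1_deriv c hc2 hc1 t).add (h2d t ht)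
      convert h using 1
      show (Λ₁ t + Λ₂ t)^2 + (-1.4) * (Λ₁ t + Λ₂ t) + 0.2 = _
      ring
    have hwc : ContinuousOn w (Icc (0:ℝ) 3) :=
      fun t ht => (hwd t ht).continuousAt.continuousWithinAt
    obtain ⟨C, hC⟩ := isCompact_Icc.exists_bound_of_continuousOn hwc
    set M : ℝ := |C| with hMdef
    have hM0 : 0 ≤ M := abs_nonneg _
    have hM : ∀ t ∈ Icc (0:ℝ) 3, |w t| ≤ M := by
      intro t ht
      have h := hC t ht
      rw [Real.norm_eq_abs] at h
      exact h.trans (le_abs_self C)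
    clear_value w Λ₁ M
    -- set up the blow-up point
    have hbb : (0:ℝ) < 1.4 + d := by linarith
    have haa : (0.32:ℝ) ≤ 1.4 - d := by linarith
    set ε : ℝ := min (d/2) (0.2*d/((M+1)*(1.4+d))) with hεdef
    have hε0 : 0 < ε := by
      apply lt_min
      · linarith
      · positivity
    have hεd : ε ≤ d/2 := min_le_left _ _
    have hεM : (M+1)*(1.4+d)*ε ≤ 0.2*d := by
      have h := min_le_right (d/2) (0.2*d/((M+1)*(1.4+d)))
      rw [← hεdef] at h
      have hpos : 0 < (M+1)*(1.4+d) := by positivity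
      calc (M+1)*(1.4+d)*ε ≤ (M+1)*(1.4+d)*(0.2*d/((M+1)*(1.4+d))) := by
            exact mul_le_mul_of_nonneg_left h (le_of_lt hpos)
        _ = 0.2*d := by field_simp
    clear_value ε
    set E : ℝ := (1.4 - d + ε)/(1.4 + d) with hEdef
    have hE0 : 0 < E := by positivity
    have hE1 : E < 1 := by
      rw [hEdef, div_lt_one hbb]
      linarith
    have hbbE : (1.4 + d) * E = 1.4 - d + ε := by
      rw [hEdef]
      field_simp
    -- E > exp(-3d)
    have he3 : Real.exp 3 = Real.exp 1 * Real.exp 1 * Real.exp 1 := by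
      rw [← Real.exp_add, ← Real.exp_add]; norm_num
    have he1 : (2.7:ℝ) < Real.exp 1 :=
      lt_trans (by norm_num) Real.exp_one_gt_d9
    have h19 : (19:ℝ) < Real.exp 3 := by
      rw [he3]; nlinarith
    have hinv : (Real.exp 3)⁻¹ < 1/19 := by
      have h0 : (0:ℝ) < Real.exp 3 := Real.exp_pos 3
      rw [inv_lt_comm₀ h0 (by norm_num)]
      simpa using h19
    have hElow : Real.exp (-3*d) < E := by
      have h1 : Real.exp (-3*d) < Real.exp (-3) :=
        Real.exp_lt_exp.mpr (by nlinarith)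
      have h2 : Real.exp (-3:ℝ) = (Real.exp 3)⁻¹ := Real.exp_neg 3
      have h3 : (1:ℝ)/19 < E := by
        rw [hEdef, div_lt_div_iff₀ (by norm_num) hbb]
        linarith
      calc Real.exp (-3*d) < Real.exp (-3) := h1
        _ = (Real.exp 3)⁻¹ := h2
        _ < 1/19 := hinv
        _ < E := h3
    clear_value E
    set t₁ : ℝ := 3 + Real.log E / d with ht₁def
    have hdpos : (0:ℝ) < d := by linarith
    have hexpE : Real.exp (d*(t₁-3)) = E := by
      have h : d*(t₁-3) = Real.log E := by
        rw [ht₁def]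
        field_simp
        ring
      rw [h, Real.exp_log hE0]
    have ht₁3 : t₁ < 3 := by
      have hlog : Real.log E < 0 := Real.log_neg hE0 hE1
      have : Real.log E / d < 0 := div_neg_of_neg_of_pos hlog hdpos
      rw [ht₁def]; linarith
    have ht₁0 : 0 < t₁ := by
      have hlog : -3*d < Real.log E := (Real.lt_log_iff_exp_lt hE0).mpr hElow
      have : (-3:ℝ) < Real.log E / d := by
        rw [lt_div_iff₀ hdpos]
        linarith
      rw [ht₁def]; linarith
    clear_value t₁
    have hsub : Icc t₁ 3 ⊆ Icc (0:ℝ) 3 :=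
      fun s hs => ⟨le_trans (le_of_lt ht₁0) hs.1, hs.2⟩
    -- the explicit solution W on [t₁, 3]
    set W : ℝ → ℝ := fun t => 0.4*(1 - Real.exp (d*(t-3))) /
      ((1.4 - d) - (1.4 + d) * Real.exp (d*(t-3))) with hWdef
    have hDneg : ∀ t ∈ Icc t₁ 3,
        (1.4 - d) - (1.4 + d) * Real.exp (d*(t-3)) ≤ -ε := by
      intro s hs
      have hEmon : E ≤ Real.exp (d*(s-3)) := by
        rw [← hexpE]
        exact Real.exp_le_exp.mpr (by nlinarith [hs.1])
      nlinarith
    have hDne : ∀ t ∈ Icc t₁ 3,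
        (1.4 - d) - (1.4 + d) * Real.exp (d*(t-3)) ≠ 0 := by
      intro s hs
      exact ne_of_lt (lt_of_le_of_lt (hDneg s hs) (by linarith))
    have hW3 : W 3 = 0 := by
      show 0.4*(1 - Real.exp (d*(3-3))) / _ = 0
      norm_num
    have hWd : ∀ t ∈ Icc t₁ 3, HasDerivAt W ((W t)^2 + (-1.4) * W t + 0.2) t :=
      fun s hs => w_deriv d hd2 s (hDne s hs)
    have hw3W : w 3 = W 3 := by rw [hw3, hW3]
    have hWt₁ : W t₁ = 0.4*(1 - E) / (-ε) := by
      rw [hWdef]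
      show 0.4*(1 - Real.exp (d*(t₁-3))) /
        ((1.4 - d) - (1.4 + d) * Real.exp (d*(t₁-3))) = _
      rw [hexpE]
      congr 1
      linarith [hbbE]
    clear_value W
    have weq := riccati_unique (-1.4) 0.2 t₁ (le_of_lt ht₁3) w W
      (fun s hs => hwd s (hsub hs)) hWd hw3W t₁ ⟨le_refl _, le_of_lt ht₁3⟩
    have h1mE : (1.4 + d) * (1 - E) = 2*d - ε := by
      have := hbbE
      nlinarith
    have hkey : M * ε < 0.4 * (1 - E) := by
      have h1 : M * ε * (1.4 + d) < 0.4 * ((1.4 + d) * (1 - E)) := by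
        rw [h1mE]
        nlinarith [mul_pos hbb hε0]
      nlinarith [mul_pos hbb hε0, hE1, hε0]
    have hWlt : W t₁ < -M := by
      rw [hWt₁, div_lt_iff_of_neg (by linarith : -ε < 0)]
      nlinarith
    have hbound := hM t₁ ⟨le_of_lt ht₁0, le_of_lt ht₁3⟩
    rw [weq] at hbound
    have := abs_le.mp hbound
    linarith [this.1]
end

section
/- Suppose the coupled system \eqref{DE3_S} for $(\mathbf{S}_1,\dots,\mathbf{S}_N)$ (a linear ODE system given the solution $(\mathbf{P}_1,\dots,\mathbf{P}_N)$ of the Riccati system on $[0,T]$) has its unique solution. Then each $\mathbf{S}_i(t) \in \mathbb{R}^{Nn}$ has the form $\mathbf{S}_i(t) = [\theta_2^T(t),\dots,\theta_1^T(t),\dots,\theta_2^T(t)]^T$ where the $i$th sub-vector is $\theta_1(t)\in\mathbb{R}^n$ and all other sub-vectors equal $\theta_2(t)\in\mathbb{R}^n$; moreover the scalar offsets satisfy $\mathbf{r}_1 = \cdots = \mathbf{r}_N$. -/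
open Matrix Set Finset

def VecHasDerivAt {m : Type*} [Fintype m]
    (S : ℝ → m → ℝ) (V : m → ℝ) (t : ℝ) : Prop :=
  ∀ v, HasDerivAt (fun s => S s v) (V v) t

section Defs
variable (N n n₁ n₂ : ℕ)

/-- `D̂ = diag[D,…,D]`. -/
noncomputable def Dhat (D : Matrix (Fin n) (Fin n₂) ℝ) :
    Matrix (Fin N × Fin n) (Fin N × Fin n₂) ℝ :=
  Matrix.of fun p q => if p.1 = q.1 then D p.2 q.2 else 0

end Defs


section Aux

variable {N n n₁ n₂ : ℕ}

/-- the index permutation on `Fin N × Fin m` induced by a permutation of players -/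
def eH (m : ℕ) (e : Equiv.Perm (Fin N)) : (Fin N × Fin m) ≃ (Fin N × Fin m) :=
  e.prodCongr (Equiv.refl _)

@[simp] lemma eH_apply (m : ℕ) (e : Equiv.Perm (Fin N)) (p : Fin N × Fin m) :
    eH m e p = (e p.1, p.2) := rfl

variable (e : Equiv.Perm (Fin N))

lemma Ahat_sub (A G : Matrix (Fin n) (Fin n) ℝ) :
    (Ahat N n A G).submatrix (eH n e) (eH n e) = Ahat N n A G := by
  ext p q
  simp [Ahat, Matrix.submatrix_apply]

lemma Bblk_sub (B : Matrix (Fin n) (Fin n₁) ℝ) (k : Fin N) :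
    (Bblk N n n₁ B (e k)).submatrix (eH n e) _root_.id = Bblk N n n₁ B k := by
  ext p c
  simp [Bblk, Matrix.submatrix_apply]

lemma Kblk_sub (Γ : Matrix (Fin n) (Fin n) ℝ) (i : Fin N) :
    (Kblk N n Γ (e i)).submatrix _root_.id (eH n e) = Kblk N n Γ i := by
  ext a q
  simp [Kblk, Matrix.submatrix_apply]

lemma Dhat_sub (D : Matrix (Fin n) (Fin n₂) ℝ) :
    (Dhat N n n₂ D).submatrix (eH n e) (eH n₂ e) = Dhat N n n₂ D := by
  ext p q
  simp [Dhat, Matrix.submatrix_apply]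

lemma submatrix_mul_mul {α β γ δ α' δ' : Type*} [Fintype β] [Fintype γ]
    (X : Matrix α β ℝ) (C : Matrix β γ ℝ) (Y : Matrix γ δ ℝ)
    (e₁ : α' → α) (e₂ : δ' → δ) :
    (X * C * Y).submatrix e₁ e₂
      = X.submatrix e₁ _root_.id * C * Y.submatrix _root_.id e₂ := by
  rw [Matrix.submatrix_mul _ _ e₁ _root_.id e₂ Function.bijective_id,
    Matrix.submatrix_mul _ _ e₁ _root_.id _root_.id Function.bijective_id,
    Matrix.submatrix_id_id]

lemma Mblk_sub (B : Matrix (Fin n) (Fin n₁) ℝ) (R : Matrix (Fin n₁) (Fin n₁) ℝ) (k : Fin N) :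
    (Bblk N n n₁ B (e k) * R⁻¹ * (Bblk N n n₁ B (e k))ᵀ).submatrix (eH n e) (eH n e)
      = Bblk N n n₁ B k * R⁻¹ * (Bblk N n n₁ B k)ᵀ := by
  rw [submatrix_mul_mul, Bblk_sub, ← Matrix.transpose_submatrix, Bblk_sub]

lemma KQK_sub (Γ Q : Matrix (Fin n) (Fin n) ℝ) (i : Fin N) :
    ((Kblk N n Γ (e i))ᵀ * Q * Kblk N n Γ (e i)).submatrix (eH n e) (eH n e)
      = (Kblk N n Γ i)ᵀ * Q * Kblk N n Γ i := by
  rw [submatrix_mul_mul, ← Matrix.transpose_submatrix, Kblk_sub]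


lemma AhatT_sub (A G : Matrix (Fin n) (Fin n) ℝ) :
    ((Ahat N n A G)ᵀ).submatrix (eH n e) (eH n e) = (Ahat N n A G)ᵀ := by
  rw [← Matrix.transpose_submatrix, Ahat_sub]

lemma submatrix_mul_same (X Y : Matrix (Fin N × Fin n) (Fin N × Fin n) ℝ) :
    (X * Y).submatrix (eH n e) (eH n e)
      = X.submatrix (eH n e) (eH n e) * Y.submatrix (eH n e) (eH n e) :=
  (Matrix.submatrix_mul_equiv X Y _ (eH n e) _).symm

lemma submatrix_sum {α β α' β' κ : Type*} (s : Finset κ) (X : κ → Matrix α β ℝ)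
    (r : α' → α) (c : β' → β) :
    (∑ k ∈ s, X k).submatrix r c = ∑ k ∈ s, (X k).submatrix r c := by
  ext p q; simp [Matrix.sum_apply]

lemma ric_equivariant (A G : Matrix (Fin n) (Fin n) ℝ)
    (B : Matrix (Fin n) (Fin n₁) ℝ) (R : Matrix (Fin n₁) (Fin n₁) ℝ)
    (Γ Q : Matrix (Fin n) (Fin n) ℝ)
    (Pt : Fin N → Matrix (Fin N × Fin n) (Fin N × Fin n) ℝ) (i : Fin N) :
    riccatiRHS N n n₁ A G B R Γ Q
        (fun k => (Pt (e k)).submatrix (eH n e) (eH n e)) i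
      = (riccatiRHS N n n₁ A G B R Γ Q Pt (e i)).submatrix (eH n e) (eH n e) := by
  rw [riccatiRHS, riccatiRHS,
    ← Equiv.sum_comp e (fun k => Bblk N n n₁ B k * R⁻¹ * (Bblk N n n₁ B k)ᵀ * Pt k),
    ← Equiv.sum_comp e
      (fun k => Pt k * (Bblk N n n₁ B k * R⁻¹ * (Bblk N n n₁ B k)ᵀ))]
  simp only [Matrix.submatrix_add, Matrix.submatrix_neg, Matrix.submatrix_sub,
    submatrix_sum, submatrix_mul_same e, Matrix.transpose_submatrix, Pi.add_apply, Pi.neg_apply, Pi.sub_apply,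
    Ahat_sub, AhatT_sub, Mblk_sub, KQK_sub]


lemma comp_add {κ κ' : Type*} (u v : κ → ℝ) (f : κ' → κ) :
    (u + v) ∘ f = u ∘ f + v ∘ f := rfl

lemma comp_sub {κ κ' : Type*} (u v : κ → ℝ) (f : κ' → κ) :
    (u - v) ∘ f = u ∘ f - v ∘ f := rfl

lemma comp_neg {κ κ' : Type*} (u : κ → ℝ) (f : κ' → κ) :
    (-u) ∘ f = -(u ∘ f) := rfl

lemma comp_sum {κ κ' γ : Type*} (s : Finset γ) (w : γ → κ → ℝ) (f : κ' → κ) :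
    (∑ k ∈ s, w k) ∘ f = ∑ k ∈ s, (w k ∘ f) := by
  funext p; simp [Finset.sum_apply]

lemma mulVec_comp (M : Matrix (Fin N × Fin n) (Fin N × Fin n) ℝ)
    (v : (Fin N × Fin n) → ℝ) :
    (M.mulVec v) ∘ (eH n e) = (M.submatrix (eH n e) (eH n e)).mulVec (v ∘ (eH n e)) := by
  rw [Matrix.submatrix_mulVec_equiv]
  have hv : (v ∘ ⇑(eH n e)) ∘ ⇑(eH n e).symm = v := by
    funext q; simp
  rw [hv]

lemma Kblk_mulVec_comp (Γ : Matrix (Fin n) (Fin n) ℝ) (i : Fin N) (w : Fin n → ℝ) :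
    ((Kblk N n Γ (e i))ᵀ.mulVec w) ∘ (eH n e) = (Kblk N n Γ i)ᵀ.mulVec w := by
  funext p
  show (Kblk N n Γ (e i))ᵀ.mulVec w (eH n e p) = _
  rw [← Kblk_sub e Γ i]
  simp [Matrix.mulVec, Matrix.submatrix_apply, Matrix.transpose_apply]

noncomputable def sRHS (A G : Matrix (Fin n) (Fin n) ℝ)
    (B : Matrix (Fin n) (Fin n₁) ℝ) (R : Matrix (Fin n₁) (Fin n₁) ℝ)
    (Γ Q : Matrix (Fin n) (Fin n) ℝ) (η : Fin n → ℝ)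
    (Pt : Fin N → Matrix (Fin N × Fin n) (Fin N × Fin n) ℝ)
    (St : Fin N → (Fin N × Fin n) → ℝ) (i : Fin N) : (Fin N × Fin n) → ℝ :=
  -( (Ahat N n A G)ᵀ.mulVec (St i))
    - (Pt i * (Bblk N n n₁ B i * R⁻¹ * (Bblk N n n₁ B i)ᵀ)).mulVec (St i)
    + (Pt i).mulVec
        (∑ k, (Bblk N n n₁ B k * R⁻¹ * (Bblk N n n₁ B k)ᵀ).mulVec (St k))
    + (∑ k, Pt k * (Bblk N n n₁ B k * R⁻¹ * (Bblk N n n₁ B k)ᵀ)).mulVec (St i)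
    + (Kblk N n Γ i)ᵀ.mulVec (Q.mulVec η)

noncomputable def rRHS (B : Matrix (Fin n) (Fin n₁) ℝ) (R : Matrix (Fin n₁) (Fin n₁) ℝ)
    (Q : Matrix (Fin n) (Fin n) ℝ) (D : Matrix (Fin n) (Fin n₂) ℝ) (η : Fin n → ℝ)
    (Pt : Fin N → Matrix (Fin N × Fin n) (Fin N × Fin n) ℝ)
    (St : Fin N → (Fin N × Fin n) → ℝ) (i : Fin N) : ℝ :=
  2 * (St i ⬝ᵥ ∑ k, (Bblk N n n₁ B k * R⁻¹ * (Bblk N n n₁ B k)ᵀ).mulVec (St k))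
    - St i ⬝ᵥ (Bblk N n n₁ B i * R⁻¹ * (Bblk N n n₁ B i)ᵀ).mulVec (St i)
    - η ⬝ᵥ Q.mulVec η
    - ((Dhat N n n₂ D)ᵀ * Pt i * Dhat N n n₂ D).trace

lemma sRHS_equivariant (A G : Matrix (Fin n) (Fin n) ℝ)
    (B : Matrix (Fin n) (Fin n₁) ℝ) (R : Matrix (Fin n₁) (Fin n₁) ℝ)
    (Γ Q : Matrix (Fin n) (Fin n) ℝ) (η : Fin n → ℝ)
    (Pt : Fin N → Matrix (Fin N × Fin n) (Fin N × Fin n) ℝ)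
    (St : Fin N → (Fin N × Fin n) → ℝ) (i : Fin N) :
    sRHS A G B R Γ Q η (fun k => (Pt (e k)).submatrix (eH n e) (eH n e))
        (fun k => St (e k) ∘ (eH n e)) i
      = (sRHS A G B R Γ Q η Pt St (e i)) ∘ (eH n e) := by
  rw [sRHS, sRHS,
    ← Equiv.sum_comp e
      (fun k => (Bblk N n n₁ B k * R⁻¹ * (Bblk N n n₁ B k)ᵀ).mulVec (St k)),
    ← Equiv.sum_comp e
      (fun k => Pt k * (Bblk N n n₁ B k * R⁻¹ * (Bblk N n n₁ B k)ᵀ))]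
  simp only [comp_add, comp_sub, comp_neg, comp_sum, mulVec_comp e,
    submatrix_mul_same e, submatrix_sum, AhatT_sub e, Mblk_sub e,
    Kblk_mulVec_comp e]

lemma trace_sandwich (D : Matrix (Fin n) (Fin n₂) ℝ)
    (X : Matrix (Fin N × Fin n) (Fin N × Fin n) ℝ) :
    ((Dhat N n n₂ D)ᵀ * X.submatrix (eH n e) (eH n e) * Dhat N n n₂ D).trace
      = ((Dhat N n n₂ D)ᵀ * X * Dhat N n n₂ D).trace := by
  conv_lhs => rw [← Dhat_sub e D]
  rw [Matrix.transpose_submatrix, Matrix.submatrix_mul_equiv,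
    Matrix.submatrix_mul_equiv]
  simp only [Matrix.trace, Matrix.diag, Matrix.submatrix_apply]
  exact Equiv.sum_comp (eH n₂ e)
    (fun p => ((Dhat N n n₂ D)ᵀ * X * Dhat N n n₂ D) p p)

lemma rRHS_equivariant (B : Matrix (Fin n) (Fin n₁) ℝ) (R : Matrix (Fin n₁) (Fin n₁) ℝ)
    (Q : Matrix (Fin n) (Fin n) ℝ) (D : Matrix (Fin n) (Fin n₂) ℝ) (η : Fin n → ℝ)
    (Pt : Fin N → Matrix (Fin N × Fin n) (Fin N × Fin n) ℝ)
    (St : Fin N → (Fin N × Fin n) → ℝ) (i : Fin N) :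
    rRHS B R Q D η (fun k => (Pt (e k)).submatrix (eH n e) (eH n e))
        (fun k => St (e k) ∘ (eH n e)) i
      = rRHS B R Q D η Pt St (e i) := by
  have hsum : (∑ k, (Bblk N n n₁ B k * R⁻¹ * (Bblk N n n₁ B k)ᵀ).mulVec
        (St (e k) ∘ (eH n e)))
      = (∑ k, (Bblk N n n₁ B (e k) * R⁻¹ * (Bblk N n n₁ B (e k))ᵀ).mulVec (St (e k)))
          ∘ (eH n e) := by
    rw [comp_sum]
    exact Finset.sum_congr rfl fun k _ => by rw [mulVec_comp e, Mblk_sub e]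
  have hdot1 : (St (e i) ∘ (eH n e)) ⬝ᵥ (∑ k,
        (Bblk N n n₁ B k * R⁻¹ * (Bblk N n n₁ B k)ᵀ).mulVec (St (e k) ∘ (eH n e)))
      = St (e i) ⬝ᵥ ∑ k,
        (Bblk N n n₁ B (e k) * R⁻¹ * (Bblk N n n₁ B (e k))ᵀ).mulVec (St (e k)) := by
    rw [hsum, comp_equiv_dotProduct_comp_equiv]
  have hMi : (Bblk N n n₁ B i * R⁻¹ * (Bblk N n n₁ B i)ᵀ).mulVec (St (e i) ∘ (eH n e))
      = ((Bblk N n n₁ B (e i) * R⁻¹ * (Bblk N n n₁ B (e i))ᵀ).mulVec (St (e i)))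
          ∘ (eH n e) := by
    rw [mulVec_comp e, Mblk_sub e]
  have hdot2 : (St (e i) ∘ (eH n e)) ⬝ᵥ
        ((Bblk N n n₁ B i * R⁻¹ * (Bblk N n n₁ B i)ᵀ).mulVec (St (e i) ∘ (eH n e)))
      = St (e i) ⬝ᵥ
        ((Bblk N n n₁ B (e i) * R⁻¹ * (Bblk N n n₁ B (e i))ᵀ).mulVec (St (e i))) := by
    rw [hMi, comp_equiv_dotProduct_comp_equiv]
  rw [rRHS, rRHS,
    ← Equiv.sum_comp e
      (fun k => (Bblk N n n₁ B k * R⁻¹ * (Bblk N n n₁ B k)ᵀ).mulVec (St k)),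
    hdot1, hdot2, trace_sandwich e]

section Smooth

variable {X : Type*} [NormedAddCommGroup X] [NormedSpace ℝ X]

/-- entrywise `C¹` for matrix-valued maps -/
def CDM {α β : Type*} (f : X → Matrix α β ℝ) : Prop :=
  ∀ p q, ContDiff ℝ 1 fun x => f x p q

/-- entrywise `C¹` for vector-valued maps -/
def CDV {α : Type*} (f : X → α → ℝ) : Prop :=
  ∀ p, ContDiff ℝ 1 fun x => f x p

lemma CDM.const {α β : Type*} (M : Matrix α β ℝ) : CDM (fun _ : X => M) :=
  fun _ _ => contDiff_const

lemma CDV.const {α : Type*} (v : α → ℝ) : CDV (fun _ : X => v) :=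
  fun _ => contDiff_const

lemma CDM.mul {α β γ : Type*} [Fintype β] {f : X → Matrix α β ℝ} {g : X → Matrix β γ ℝ}
    (hf : CDM f) (hg : CDM g) : CDM (fun x => f x * g x) := by
  intro p q
  simp only [Matrix.mul_apply]
  exact ContDiff.sum fun r _ => (hf p r).mul (hg r q)

lemma CDM.add {α β : Type*} {f g : X → Matrix α β ℝ} (hf : CDM f) (hg : CDM g) :
    CDM (fun x => f x + g x) := fun p q => by
  simp only [Matrix.add_apply]; exact (hf p q).add (hg p q)

lemma CDM.sub {α β : Type*} {f g : X → Matrix α β ℝ} (hf : CDM f) (hg : CDM g) :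
    CDM (fun x => f x - g x) := fun p q => by
  simp only [Matrix.sub_apply]; exact (hf p q).sub (hg p q)

lemma CDM.neg {α β : Type*} {f : X → Matrix α β ℝ} (hf : CDM f) :
    CDM (fun x => -(f x)) := fun p q => by
  simp only [Matrix.neg_apply]; exact (hf p q).neg

lemma CDM.sum {α β κ : Type*} [Fintype κ] {f : κ → X → Matrix α β ℝ}
    (hf : ∀ k, CDM (f k)) : CDM (fun x => ∑ k, f k x) := fun p q => by
  simp only [Matrix.sum_apply]
  exact ContDiff.sum fun k _ => hf k p q

lemma CDM.mulVec {α β : Type*} [Fintype β] {f : X → Matrix α β ℝ} {g : X → β → ℝ}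
    (hf : CDM f) (hg : CDV g) : CDV (fun x => (f x).mulVec (g x)) := fun p => by
  simp only [Matrix.mulVec, dotProduct]
  exact ContDiff.sum fun r _ => (hf p r).mul (hg r)

lemma CDV.add {α : Type*} {f g : X → α → ℝ} (hf : CDV f) (hg : CDV g) :
    CDV (fun x => f x + g x) := fun p => by
  simp only [Pi.add_apply]; exact (hf p).add (hg p)

lemma CDV.sub {α : Type*} {f g : X → α → ℝ} (hf : CDV f) (hg : CDV g) :
    CDV (fun x => f x - g x) := fun p => by
  simp only [Pi.sub_apply]; exact (hf p).sub (hg p)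

lemma CDV.neg {α : Type*} {f : X → α → ℝ} (hf : CDV f) :
    CDV (fun x => -(f x)) := fun p => by
  simp only [Pi.neg_apply]; exact (hf p).neg

lemma CDV.sum {α κ : Type*} [Fintype κ] {f : κ → X → α → ℝ}
    (hf : ∀ k, CDV (f k)) : CDV (fun x => ∑ k, f k x) := fun p => by
  simp only [Finset.sum_apply]
  exact ContDiff.sum fun k _ => hf k p

lemma CDV.dot {α : Type*} [Fintype α] {f g : X → α → ℝ} (hf : CDV f) (hg : CDV g) :
    ContDiff ℝ 1 (fun x => f x ⬝ᵥ g x) := by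
  simp only [dotProduct]
  exact ContDiff.sum fun r _ => (hf r).mul (hg r)

lemma CDM.trace {α : Type*} [Fintype α] {f : X → Matrix α α ℝ} (hf : CDM f) :
    ContDiff ℝ 1 (fun x => (f x).trace) := by
  simp only [Matrix.trace, Matrix.diag]
  exact ContDiff.sum fun r _ => hf r r

end Smooth

section VField

variable {N n n₁ n₂ : ℕ}

/-- the combined state space for `(P, S, r)` -/
abbrev EE (N n : ℕ) : Type :=
  (Fin N → (Fin N × Fin n) → (Fin N × Fin n) → ℝ)
    × (Fin N → (Fin N × Fin n) → ℝ) × (Fin N → ℝ)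

variable (N n n₁ n₂)

noncomputable def Fvec (A G Γ Q : Matrix (Fin n) (Fin n) ℝ)
    (B : Matrix (Fin n) (Fin n₁) ℝ) (R : Matrix (Fin n₁) (Fin n₁) ℝ)
    (D : Matrix (Fin n) (Fin n₂) ℝ) (η : Fin n → ℝ) : EE N n → EE N n := fun x =>
  (fun i => riccatiRHS N n n₁ A G B R Γ Q (fun k => x.1 k) i,
   fun i => sRHS A G B R Γ Q η (fun k => x.1 k) x.2.1 i,
   fun i => rRHS B R Q D η (fun k => x.1 k) x.2.1 i)

variable {N n n₁ n₂}

lemma cdm_P (k : Fin N) :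
    CDM (α := Fin N × Fin n) (β := Fin N × Fin n) (fun x : EE N n => x.1 k) :=
  fun p q => by fun_prop

lemma cdv_S (k : Fin N) : CDV (fun x : EE N n => x.2.1 k) :=
  fun p => by fun_prop

lemma Fvec_contDiff (A G Γ Q : Matrix (Fin n) (Fin n) ℝ)
    (B : Matrix (Fin n) (Fin n₁) ℝ) (R : Matrix (Fin n₁) (Fin n₁) ℝ)
    (D : Matrix (Fin n) (Fin n₂) ℝ) (η : Fin n → ℝ) :
    ContDiff ℝ 1 (Fvec N n n₁ n₂ A G Γ Q B R D η) := by
  have hric : ∀ i : Fin N,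
      CDM (fun x : EE N n => riccatiRHS N n n₁ A G B R Γ Q (fun k => x.1 k) i) := by
    intro i
    simp only [riccatiRHS]
    exact ((((((cdm_P i).mul (CDM.const _)).add ((CDM.const _).mul (cdm_P i))).neg).add
      (((cdm_P i).mul (CDM.sum fun k => (CDM.const _).mul (cdm_P k))).add
        ((CDM.sum fun k => (cdm_P k).mul (CDM.const _)).mul (cdm_P i)))).sub
      (((cdm_P i).mul (CDM.const _)).mul (cdm_P i))).sub (CDM.const _)
  have hs : ∀ i : Fin N,
      CDV (fun x : EE N n => sRHS A G B R Γ Q η (fun k => x.1 k) x.2.1 i) := by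
    intro i
    simp only [sRHS]
    exact (((((CDM.const _).mulVec (cdv_S i)).neg.sub
      (((cdm_P i).mul (CDM.const _)).mulVec (cdv_S i))).add
      ((cdm_P i).mulVec (CDV.sum fun k => (CDM.const _).mulVec (cdv_S k)))).add
      ((CDM.sum fun k => (cdm_P k).mul (CDM.const _)).mulVec (cdv_S i))).add
      (CDV.const _)
  have hrr : ∀ i : Fin N,
      ContDiff ℝ 1 (fun x : EE N n => rRHS B R Q D η (fun k => x.1 k) x.2.1 i) := by
    intro i
    simp only [rRHS]
    exact (((contDiff_const.mul ((cdv_S i).dot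
      (CDV.sum fun k => (CDM.const _).mulVec (cdv_S k)))).sub
      ((cdv_S i).dot ((CDM.const _).mulVec (cdv_S i)))).sub contDiff_const).sub
      ((((CDM.const _).mul (cdm_P i)).mul (CDM.const _)).trace)
  have h1 : ContDiff ℝ 1 (fun (x : EE N n) (i : Fin N) (p q : Fin N × Fin n) =>
      riccatiRHS N n n₁ A G B R Γ Q (fun k => x.1 k) i p q) :=
    contDiff_pi.2 fun i => contDiff_pi.2 fun p => contDiff_pi.2 fun q => hric i p q
  have h2 : ContDiff ℝ 1 (fun (x : EE N n) (i : Fin N) (p : Fin N × Fin n) =>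
      sRHS A G B R Γ Q η (fun k => x.1 k) x.2.1 i p) :=
    contDiff_pi.2 fun i => contDiff_pi.2 fun p => hs i p
  have h3 : ContDiff ℝ 1 (fun (x : EE N n) (i : Fin N) =>
      rRHS B R Q D η (fun k => x.1 k) x.2.1 i) :=
    contDiff_pi.2 fun i => hrr i
  exact ContDiff.prodMk h1 (ContDiff.prodMk h2 h3)

end VField


section Uniq

variable {E : Type*} [NormedAddCommGroup E] [NormedSpace ℝ E] [FiniteDimensional ℝ E]

/-- Backward-in-time uniqueness for the autonomous ODE `x' = F x` with `F` of class `C¹`,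
on a compact time interval, with the data prescribed at the right endpoint. -/
lemma backward_uniqueness {F : E → E} (hF : ContDiff ℝ 1 F) {T : ℝ}
    {f g : ℝ → E}
    (hf : ∀ t ∈ Icc (0:ℝ) T, HasDerivAt f (F (f t)) t)
    (hg : ∀ t ∈ Icc (0:ℝ) T, HasDerivAt g (F (g t)) t)
    (hend : f T = g T) : EqOn f g (Icc 0 T) := by
  rcases le_or_gt T 0 with hT | hT
  · intro t ht
    have : t = T := le_antisymm (ht.2) (hT.trans ht.1)
    rw [this, hend]
  have hfc : ContinuousOn f (Icc 0 T) :=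
    fun t ht => ((hf t ht).continuousAt).continuousWithinAt
  have hgc : ContinuousOn g (Icc 0 T) :=
    fun t ht => ((hg t ht).continuousAt).continuousWithinAt
  have hK : IsCompact (f '' Icc 0 T ∪ g '' Icc 0 T) :=
    (isCompact_Icc.image_of_continuousOn hfc).union
      (isCompact_Icc.image_of_continuousOn hgc)
  obtain ⟨ρ, hρ⟩ := hK.isBounded.subset_closedBall 0
  have hcb : IsCompact (Metric.closedBall (0:E) ρ) := isCompact_closedBall 0 ρ
  obtain ⟨C, hC⟩ := hcb.exists_bound_of_continuousOn
    ((hF.continuous_fderiv one_ne_zero).continuousOn)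
  have hlip : LipschitzOnWith C.toNNReal F (Metric.closedBall (0:E) ρ) := by
    apply (convex_closedBall _ _).lipschitzOnWith_of_nnnorm_fderiv_le
      (fun x _ => (hF.differentiable one_ne_zero).differentiableAt)
    intro x hx
    have h1 : ‖fderiv ℝ F x‖ ≤ C := hC x hx
    rw [← norm_toNNReal]
    exact Real.toNNReal_le_toNNReal h1
  exact ODE_solution_unique_of_mem_Icc_left
    (fun _ _ => hlip) hfc
    (fun t ht => (hf t (Ioc_subset_Icc_self ht)).hasDerivWithinAt)
    (fun t ht => hρ (Or.inl ⟨t, Ioc_subset_Icc_self ht, rfl⟩))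
    hgc
    (fun t ht => (hg t (Ioc_subset_Icc_self ht)).hasDerivWithinAt)
    (fun t ht => hρ (Or.inr ⟨t, Ioc_subset_Icc_self ht, rfl⟩))
    hend

end Uniq

end Aux

/-- Proposition 1: the solutions `Sᵢ` of the linear system \eqref{DE3_S} have the
form `Sᵢ = [θ₂ᵀ,…,θ₁ᵀ,…,θ₂ᵀ]ᵀ` (with `θ₁` in the `i`th sub-vector), and the scalar
offsets of \eqref{DE3_gamma} satisfy `r₁ = ⋯ = r_N`. -/
theorem stmt15 {n n₁ n₂ : ℕ} {N : ℕ} [NeZero N] (T : ℝ) (hT : 0 < T)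
    (A G Γ Γf Q Qf : Matrix (Fin n) (Fin n) ℝ)
    (B : Matrix (Fin n) (Fin n₁) ℝ) (R : Matrix (Fin n₁) (Fin n₁) ℝ)
    (D : Matrix (Fin n) (Fin n₂) ℝ) (η ηf : Fin n → ℝ)
    (hQ : Q.PosSemidef) (hR : R.PosDef) (hQf : Qf.PosSemidef)
    -- the Riccati system has a solution (P₁,…,P_N) on [0,T]
    (P : Fin N → ℝ → Matrix (Fin N × Fin n) (Fin N × Fin n) ℝ)
    (hPT : ∀ i, P i T = (Kblk N n Γf i)ᵀ * Qf * Kblk N n Γf i)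
    (hP : ∀ i, ∀ t ∈ Icc (0:ℝ) T,
      MatrixHasDerivAt (P i) (riccatiRHS N n n₁ A G B R Γ Q (fun k => P k t) i) t)
    -- (S₁,…,S_N) solves the linear system \eqref{DE3_S}
    (S : Fin N → ℝ → (Fin N × Fin n) → ℝ)
    (hST : ∀ i, S i T = -((Kblk N n Γf i)ᵀ.mulVec (Qf.mulVec ηf)))
    (hS : ∀ i, ∀ t ∈ Icc (0:ℝ) T, VecHasDerivAt (S i)
      (-( (Ahat N n A G)ᵀ.mulVec (S i t))
        - (P i t * (Bblk N n n₁ B i * R⁻¹ * (Bblk N n n₁ B i)ᵀ)).mulVec (S i t)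
        + (P i t).mulVec
            (∑ k, (Bblk N n n₁ B k * R⁻¹ * (Bblk N n n₁ B k)ᵀ).mulVec (S k t))
        + (∑ k, P k t * (Bblk N n n₁ B k * R⁻¹ * (Bblk N n n₁ B k)ᵀ)).mulVec (S i t)
        + (Kblk N n Γ i)ᵀ.mulVec (Q.mulVec η)) t)
    -- (r₁,…,r_N) solves \eqref{DE3_gamma}
    (r : Fin N → ℝ → ℝ)
    (hrT : ∀ i, r i T = ηf ⬝ᵥ Qf.mulVec ηf)
    (hr : ∀ i, ∀ t ∈ Icc (0:ℝ) T, HasDerivAt (r i)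
      (2 * (S i t ⬝ᵥ ∑ k, (Bblk N n n₁ B k * R⁻¹ * (Bblk N n n₁ B k)ᵀ).mulVec (S k t))
        - S i t ⬝ᵥ (Bblk N n n₁ B i * R⁻¹ * (Bblk N n n₁ B i)ᵀ).mulVec (S i t)
        - η ⬝ᵥ Q.mulVec η
        - ((Dhat N n n₂ D)ᵀ * P i t * Dhat N n n₂ D).trace) t) :
    (∃ θ₁ θ₂ : ℝ → Fin n → ℝ, ∀ i, ∀ t ∈ Icc (0:ℝ) T, ∀ j a,
        S i t (j, a) = if j = i then θ₁ t a else θ₂ t a) ∧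
    (∀ i i' : Fin N, ∀ t ∈ Icc (0:ℝ) T, r i t = r i' t) := by
  have key : ∀ (e : Equiv.Perm (Fin N)), ∀ t ∈ Icc (0:ℝ) T, ∀ i : Fin N,
      (∀ p : Fin N × Fin n, S i t p = S (e i) t (eH n e p)) ∧ r i t = r (e i) t := by
    intro e
    set f : ℝ → EE N n :=
      fun t => (fun i => P i t, fun i => S i t, fun i => r i t) with hfdef
    set g : ℝ → EE N n :=
      fun t => (fun i => (P (e i) t).submatrix (eH n e) (eH n e),
        fun i => S (e i) t ∘ (eH n e), fun i => r (e i) t) with hgdef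
    have hfD : ∀ t ∈ Icc (0:ℝ) T,
        HasDerivAt f (Fvec N n n₁ n₂ A G Γ Q B R D η (f t)) t := by
      intro t ht
      refine HasDerivAt.prodMk ?_ (HasDerivAt.prodMk ?_ ?_)
      · show HasDerivAt
          (fun s => (fun (i : Fin N) (p q : Fin N × Fin n) => P i s p q))
          (fun (i : Fin N) (p q : Fin N × Fin n) =>
            riccatiRHS N n n₁ A G B R Γ Q (fun k => P k t) i p q) t
        exact hasDerivAt_pi.2 fun i => hasDerivAt_pi.2 fun p =>
          hasDerivAt_pi.2 fun q => hP i t ht p q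
      · show HasDerivAt
          (fun s => (fun (i : Fin N) (p : Fin N × Fin n) => S i s p))
          (fun (i : Fin N) (p : Fin N × Fin n) =>
            sRHS A G B R Γ Q η (fun k => P k t) (fun k => S k t) i p) t
        exact hasDerivAt_pi.2 fun i => hasDerivAt_pi.2 fun p => hS i t ht p
      · show HasDerivAt (fun s => (fun (i : Fin N) => r i s))
          (fun (i : Fin N) =>
            rRHS B R Q D η (fun k => P k t) (fun k => S k t) i) t
        exact hasDerivAt_pi.2 fun i => hr i t ht
    have hgD : ∀ t ∈ Icc (0:ℝ) T,
        HasDerivAt g (Fvec N n n₁ n₂ A G Γ Q B R D η (g t)) t := by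
      intro t ht
      have hvalP : ∀ i : Fin N, riccatiRHS N n n₁ A G B R Γ Q
            (fun k => (P (e k) t).submatrix (eH n e) (eH n e)) i
          = (riccatiRHS N n n₁ A G B R Γ Q (fun k => P k t) (e i)).submatrix
              (eH n e) (eH n e) :=
        fun i => ric_equivariant e A G B R Γ Q (fun k => P k t) i
      have hvalS : ∀ i : Fin N, sRHS A G B R Γ Q η
            (fun k => (P (e k) t).submatrix (eH n e) (eH n e))
            (fun k => S (e k) t ∘ (eH n e)) i
          = (sRHS A G B R Γ Q η (fun k => P k t) (fun k => S k t) (e i))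
              ∘ (eH n e) :=
        fun i => sRHS_equivariant e A G B R Γ Q η (fun k => P k t)
          (fun k => S k t) i
      have hvalr : ∀ i : Fin N, rRHS B R Q D η
            (fun k => (P (e k) t).submatrix (eH n e) (eH n e))
            (fun k => S (e k) t ∘ (eH n e)) i
          = rRHS B R Q D η (fun k => P k t) (fun k => S k t) (e i) :=
        fun i => rRHS_equivariant e B R Q D η (fun k => P k t)
          (fun k => S k t) i
      refine HasDerivAt.prodMk ?_ (HasDerivAt.prodMk ?_ ?_)
      · show HasDerivAt
          (fun s => (fun (i : Fin N) (p q : Fin N × Fin n) =>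
            P (e i) s ((eH n e) p) ((eH n e) q)))
          (fun (i : Fin N) (p q : Fin N × Fin n) =>
            riccatiRHS N n n₁ A G B R Γ Q
              (fun k => (P (e k) t).submatrix (eH n e) (eH n e)) i p q) t
        refine hasDerivAt_pi.2 fun i => hasDerivAt_pi.2 fun p =>
          hasDerivAt_pi.2 fun q => ?_
        rw [hvalP i]
        exact hP (e i) t ht (eH n e p) (eH n e q)
      · show HasDerivAt
          (fun s => (fun (i : Fin N) (p : Fin N × Fin n) => S (e i) s ((eH n e) p)))
          (fun (i : Fin N) (p : Fin N × Fin n) =>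
            sRHS A G B R Γ Q η (fun k => (P (e k) t).submatrix (eH n e) (eH n e))
              (fun k => S (e k) t ∘ (eH n e)) i p) t
        refine hasDerivAt_pi.2 fun i => hasDerivAt_pi.2 fun p => ?_
        rw [congrFun (hvalS i) p]
        exact hS (e i) t ht (eH n e p)
      · show HasDerivAt (fun s => (fun (i : Fin N) => r (e i) s))
          (fun (i : Fin N) =>
            rRHS B R Q D η (fun k => (P (e k) t).submatrix (eH n e) (eH n e))
              (fun k => S (e k) t ∘ (eH n e)) i) t
        refine hasDerivAt_pi.2 fun i => ?_
        rw [hvalr i]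
        exact hr (e i) t ht
    have hend : g T = f T := by
      refine Prod.ext ?_ (Prod.ext ?_ ?_)
      · funext i
        show (P (e i) T).submatrix (eH n e) (eH n e) = P i T
        rw [hPT (e i), hPT i, KQK_sub e]
      · funext i
        show S (e i) T ∘ (eH n e) = S i T
        rw [hST (e i), hST i, comp_neg, Kblk_mulVec_comp e]
      · funext i
        show r (e i) T = r i T
        rw [hrT, hrT]
    have heq : EqOn g f (Icc 0 T) :=
      backward_uniqueness (Fvec_contDiff A G Γ Q B R D η) hgD hfD hend
    intro t ht i
    have h := heq ht
    constructor
    · intro p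
      have := congrFun (congrFun (congrArg (fun x : EE N n => x.2.1) h) i) p
      exact this.symm
    · have := congrFun (congrArg (fun x : EE N n => x.2.2) h) i
      exact this.symm
  refine ⟨?_, ?_⟩
  · by_cases hN : ∃ j₀ : Fin N, j₀ ≠ 0
    · obtain ⟨j₀, hj₀⟩ := hN
      refine ⟨fun t a => S 0 t (0, a), fun t a => S 0 t (j₀, a), ?_⟩
      intro i t ht j a
      by_cases hji : j = i
      · subst hji
        rw [if_pos rfl]
        have h := (key (Equiv.swap 0 j) t ht 0).1 (0, a)
        simpa [Equiv.swap_apply_left] using h.symm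
      · rw [if_neg hji]
        set e₁ : Equiv.Perm (Fin N) := Equiv.swap 0 i with he₁
        have hj' : e₁ j₀ ≠ i := by
          intro hcon
          apply hj₀
          have : e₁ j₀ = e₁ 0 := by rw [hcon, Equiv.swap_apply_left]
          exact e₁.injective this
        set e : Equiv.Perm (Fin N) := (Equiv.swap (e₁ j₀) j) * e₁ with he
        have he0 : e 0 = i := by
          rw [he, Equiv.Perm.mul_apply, he₁, Equiv.swap_apply_left,
            Equiv.swap_apply_of_ne_of_ne (Ne.symm hj') (fun hc => hji (hc.symm))]
        have hej : e j₀ = j := by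
          rw [he, Equiv.Perm.mul_apply, Equiv.swap_apply_left]
        have h := (key e t ht 0).1 (j₀, a)
        rw [he0] at h
        have h2 : eH n e (j₀, a) = (j, a) := by
          rw [eH_apply, hej]
        rw [h2] at h
        exact h.symm
    · push_neg at hN
      refine ⟨fun t a => S 0 t (0, a), fun _ _ => 0, ?_⟩
      intro i t ht j a
      have hi := hN i
      have hj := hN j
      subst hi; subst hj
      rw [if_pos rfl]
  · intro i i' t ht
    have h := (key (Equiv.swap i i') t ht i).2
    rwa [Equiv.swap_apply_left] at h
end
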